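/- arXiv:math/9906016 — 10 statements merged into one kernel-verified Lean document; each statement's English description precedes it below -/
import Mathlib

section
/- Let (k_1, k_2, k_3, …) be any infinite sequence of nonnegative integers having infinitely many nonzero terms. Then there exists a pair (α,β) ∈ △ whose triangle sequence is nonterminating and equals (k_1, k_2, k_3, …). -/
/-- The triangle △ = {(x,y) : 1 ≥ x ≥ y > 0}. -/
def Tri : Set (ℝ × ℝ) := {p | p.1 ≤ 1 ∧ p.2 ≤ p.1 ∧ 0 < p.2}

/-- The subtriangle △ₖ = {(x,y) ∈ △ : 1 - x - ky ≥ 0 > 1 - x - (k+1)y}. -/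
def TriK (k : ℕ) : Set (ℝ × ℝ) :=
  {p | p ∈ Tri ∧ 0 ≤ 1 - p.1 - (k : ℝ) * p.2 ∧ 1 - p.1 - ((k : ℝ) + 1) * p.2 < 0}

/-- The triangle map T, on the piece △ₖ : T(α,β) = (β/α, (1-α-kβ)/α). -/
noncomputable def TmapK (k : ℕ) (p : ℝ × ℝ) : ℝ × ℝ :=
  (p.2 / p.1, (1 - p.1 - (k : ℝ) * p.2) / p.1)

/-- The sequence of numbers d₋₂ = 1, d₋₁ = α, d₀ = β,
    d_k = d_{k-3} - d_{k-2} - a_k·d_{k-1}, shifted so that `triD α β n` is d_{n-2};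
    here a_k is the nonnegative integer with
    d_{k-3} - d_{k-2} - a_k·d_{k-1} ≥ 0 > d_{k-3} - d_{k-2} - (a_k+1)·d_{k-1}
    (i.e. the floor of (d_{k-3} - d_{k-2})/d_{k-1}).  If some d_k = 0 the
    sequence (has terminated and) is continued by 0's. -/
noncomputable def triD (α β : ℝ) : ℕ → ℝ
  | 0 => 1
  | 1 => α
  | 2 => β
  | (k+3) =>
    if 0 < triD α β (k+2) then
      triD α β k - triD α β (k+1) -
        ((⌊(triD α β k - triD α β (k+1)) / triD α β (k+2)⌋).toNat : ℝ) * triD α β (k+2)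
    else 0

/-- The triangle sequence of (α,β): `triA α β n` is the term a_{n+1}, so that the
    triangle sequence (a₁, a₂, …) is (triA α β 0, triA α β 1, …). -/
noncomputable def triA (α β : ℝ) (k : ℕ) : ℕ :=
  (⌊(triD α β k - triD α β (k+1)) / triD α β (k+2)⌋).toNat

namespace Stmt5Aux

/-- Truncated solution of the backward recurrence, seeded at level n. -/
def eaux : (ℕ → ℕ) → ℕ → ℕ → ℕ
  | _, 0, j => if j = 0 then 1 else 0
  | b, n+1, 0 => eaux (fun i => b (i+1)) n 0 + b 0 * eaux (fun i => b (i+1)) n 1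
      + eaux (fun i => b (i+1)) n 2
  | b, n+1, j+1 => eaux (fun i => b (i+1)) n j

lemma eaux_pos (b : ℕ → ℕ) {n j : ℕ} (h : j ≤ n) : 1 ≤ eaux b n j := by
  induction n generalizing b j with
  | zero => interval_cases j; simp [eaux]
  | succ n ih =>
    cases j with
    | zero =>
      have := ih (fun i => b (i+1)) (Nat.zero_le n)
      show 1 ≤ eaux _ n 0 + _ * _ + _
      omega
    | succ j => exact ih (fun i => b (i+1)) (by omega)

lemma eaux_mono (b : ℕ → ℕ) (n j : ℕ) : eaux b n (j+1) ≤ eaux b n j := by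
  induction n generalizing b j with
  | zero => cases j <;> simp [eaux]
  | succ n ih =>
    cases j with
    | zero =>
      show eaux (fun i => b (i+1)) n 0 ≤ eaux (fun i => b (i+1)) n 0 + _ + _
      omega
    | succ j => exact ih (fun i => b (i+1)) j

lemma eaux_anti (b : ℕ → ℕ) (n : ℕ) : Antitone (eaux b n) :=
  antitone_nat_of_succ_le (eaux_mono b n)

lemma eaux_rec (b : ℕ → ℕ) {n j : ℕ} (h : j < n) :
    eaux b n j = eaux b n (j+1) + b j * eaux b n (j+2) + eaux b n (j+3) := by
  induction n generalizing b j with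
  | zero => omega
  | succ n ih =>
    cases j with
    | zero => rfl
    | succ j => exact ih (fun i => b (i+1)) (by omega)

lemma eaux_bound (b : ℕ → ℕ) {n j : ℕ} (h : j ≤ n) :
    eaux b n 0 ≤ (∏ i ∈ Finset.range j, (2 + b i)) * eaux b n j := by
  induction j with
  | zero => simpa using le_rfl
  | succ j ih =>
    have h1 : eaux b n j ≤ (2 + b j) * eaux b n (j+1) := by
      have := eaux_rec b (show j < n by omega)
      have h2 := eaux_anti b n (show j+1 ≤ j+2 by omega)
      have h3 := eaux_anti b n (show j+1 ≤ j+3 by omega)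
      nlinarith [Nat.zero_le (b j)]
    calc eaux b n 0 ≤ (∏ i ∈ Finset.range j, (2 + b i)) * eaux b n j := ih (by omega)
      _ ≤ (∏ i ∈ Finset.range j, (2 + b i)) * ((2 + b j) * eaux b n (j+1)) :=
          Nat.mul_le_mul_left _ h1
      _ = (∏ i ∈ Finset.range (j+1), (2 + b i)) * eaux b n (j+1) := by
          rw [Finset.prod_range_succ]; ring

end Stmt5Aux

open Stmt5Aux Filter Topology

/-- For any infinite sequence (k₁, k₂, …) of nonnegative integers with infinitely many
nonzero terms (here b n = k_{n+1}), there is a pair (α,β) ∈ △ whose triangle sequence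
is nonterminating and equals (k₁, k₂, …). -/
theorem stmt_5 (b : ℕ → ℕ) (hb : {n | b n ≠ 0}.Infinite) :
    ∃ α β : ℝ, (α, β) ∈ Tri ∧ (∀ k, 0 < triD α β k) ∧ ∀ n, triA α β n = b n := by
  classical
  set f : ℕ → ℕ → ℝ := fun n j => (eaux b n j : ℝ) / (eaux b n 0 : ℝ) with hf
  have hpos0 : ∀ n, (0:ℝ) < (eaux b n 0 : ℝ) := by
    intro n; exact_mod_cast Nat.lt_of_lt_of_le Nat.zero_lt_one (eaux_pos b (Nat.zero_le n))
  have hmem : ∀ n, f n ∈ Set.pi Set.univ (fun _ : ℕ => Set.Icc (0:ℝ) 1) := by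
    intro n
    intro j _
    constructor
    · positivity
    · rw [div_le_one (hpos0 n)]
      exact_mod_cast eaux_anti b n (Nat.zero_le j)
  obtain ⟨F, hFmem, φ, hφ, htend⟩ :=
    (isCompact_univ_pi fun _ : ℕ => isCompact_Icc).tendsto_subseq hmem
  have hcoord : ∀ j, Tendsto (fun n => f (φ n) j) atTop (𝓝 (F j)) := by
    intro j
    exact (tendsto_pi_nhds.mp htend j)
  have hφle : ∀ n, n ≤ φ n := fun n => hφ.le_apply
  -- F 0 = 1
  have hF0 : F 0 = 1 := by
    have h1 : Tendsto (fun n => f (φ n) 0) atTop (𝓝 1) := by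
      have : (fun n => f (φ n) 0) = fun _ => (1:ℝ) := by
        funext n; simp only [hf]; exact div_self (ne_of_gt (hpos0 _))
      rw [this]; exact tendsto_const_nhds
    exact tendsto_nhds_unique (hcoord 0) h1
  -- recurrence for F
  have hrecF : ∀ j, F j = F (j+1) + (b j : ℝ) * F (j+2) + F (j+3) := by
    intro j
    have h1 : Tendsto (fun n => f (φ n) (j+1) + (b j : ℝ) * f (φ n) (j+2) + f (φ n) (j+3))
        atTop (𝓝 (F (j+1) + (b j : ℝ) * F (j+2) + F (j+3))) :=
      ((hcoord (j+1)).add (tendsto_const_nhds.mul (hcoord (j+2)))).add (hcoord (j+3))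
    refine tendsto_nhds_unique (hcoord j) (h1.congr' ?_)
    filter_upwards [eventually_ge_atTop (j+1)] with n hn
    have hjn : j < φ n := lt_of_lt_of_le hn (hφle n)
    have := eaux_rec b hjn
    simp only [hf]
    rw [this]
    push_cast
    field_simp
  -- positivity of F
  have hFpos : ∀ j, 0 < F j := by
    intro j
    have hPpos : (0:ℝ) < (∏ i ∈ Finset.range j, ((2 + b i : ℕ) : ℝ)) := by
      apply Finset.prod_pos; intro i _
      exact_mod_cast (by omega : 0 < 2 + b i)
    have hc : (0:ℝ) < (∏ i ∈ Finset.range j, ((2 + b i : ℕ) : ℝ))⁻¹ := by positivity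
    refine lt_of_lt_of_le hc (ge_of_tendsto (hcoord j) ?_)
    filter_upwards [eventually_ge_atTop j] with n hn
    have hjn : j ≤ φ n := Nat.le_trans hn (hφle n)
    have hB := eaux_bound b hjn
    simp only [hf]
    rw [le_div_iff₀ (hpos0 (φ n)), inv_mul_le_iff₀ hPpos]
    exact_mod_cast hB
  -- strict decrease
  have hdec : ∀ j, F (j+1) < F j := by
    intro j
    have h := hrecF j
    nlinarith [hFpos (j+2), hFpos (j+3), mul_nonneg (show (0:ℝ) ≤ (b j : ℝ) by positivity) (hFpos (j+2)).le]
  -- floor computation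
  have hfloor : ∀ j, ⌊(F j - F (j+1)) / F (j+2)⌋ = (b j : ℤ) := by
    intro j
    have h2 := hFpos (j+2)
    rw [Int.floor_eq_iff]
    constructor
    · rw [le_div_iff₀ h2]
      have := hrecF j
      push_cast
      nlinarith [hFpos (j+3)]
    · rw [div_lt_iff₀ h2]
      have := hrecF j
      have := hdec (j+2)
      push_cast
      nlinarith
  -- identify triD with F
  have hD : ∀ k, triD (F 1) (F 2) k = F k := by
    intro k
    induction k using Nat.strong_induction_on with
    | _ k ih =>
      match k with
      | 0 => rw [hF0]; rfl
      | 1 => rfl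
      | 2 => rfl
      | (k+3) =>
        have h0 := ih k (by omega)
        have h1 := ih (k+1) (by omega)
        have h2 := ih (k+2) (by omega)
        rw [triD, h0, h1, h2, if_pos (hFpos (k+2)), hfloor k, Int.toNat_natCast]
        have := hrecF k
        linarith
  refine ⟨F 1, F 2, ⟨?_, ?_, ?_⟩, ?_, ?_⟩
  · exact hF0 ▸ (hdec 0).le
  · exact (hdec 1).le
  · exact hFpos 2
  · intro k; rw [hD k]; exact hFpos k
  · intro n
    unfold triA
    rw [hD n, hD (n+1), hD (n+2), hfloor n, Int.toNat_natCast]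
end

section
/- For each nonnegative integer k, the restriction of the triangle map T to △_k is a bijection from △_k onto the set {(u,v) ∈ ℝ² : 1 ≥ u > v ≥ 0}; explicitly, for every (u,v) with 1 ≥ u > v ≥ 0 the unique point of △_k mapping to (u,v) is (α,β) with α = 1/(1 + v + ku) and β = u/(1 + v + ku). -/
lemma triK_pos {k : ℕ} {p : ℝ × ℝ} (hp : p ∈ TriK k) : 0 < p.1 :=
  lt_of_lt_of_le hp.1.2.2 hp.1.2.1

lemma tmap_maps (k : ℕ) : ∀ p ∈ TriK k,
    TmapK k p ∈ {p : ℝ × ℝ | p.1 ≤ 1 ∧ p.2 < p.1 ∧ 0 ≤ p.2} := by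
  intro p hp
  have hα : 0 < p.1 := triK_pos hp
  obtain ⟨⟨h1, h2, h3⟩, h4, h5⟩ := hp
  simp only [TmapK, Set.mem_setOf_eq]
  refine ⟨?_, ?_, ?_⟩
  · exact div_le_one_of_le₀ h2 hα.le
  · rw [div_lt_div_iff₀ hα hα]; nlinarith
  · exact div_nonneg h4 hα.le

lemma tmap_key (k : ℕ) : ∀ u v : ℝ, u ≤ 1 → v < u → 0 ≤ v →
    (1 / (1 + v + (k : ℝ) * u), u / (1 + v + (k : ℝ) * u)) ∈ TriK k ∧
    TmapK k (1 / (1 + v + (k : ℝ) * u), u / (1 + v + (k : ℝ) * u)) = (u, v) ∧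
    ∀ p ∈ TriK k, TmapK k p = (u, v) →
      p = (1 / (1 + v + (k : ℝ) * u), u / (1 + v + (k : ℝ) * u)) := by
  intro u v hu huv hv
  have hu0 : 0 < u := lt_of_le_of_lt hv huv
  have hku : 0 ≤ (k : ℝ) * u := mul_nonneg (Nat.cast_nonneg k) hu0.le
  set D : ℝ := 1 + v + (k : ℝ) * u with hD
  have hD0 : 0 < D := by positivity
  have hD1 : 1 ≤ D := by nlinarith
  refine ⟨⟨⟨?_, ?_, ?_⟩, ?_, ?_⟩, ?_, ?_⟩
  · exact div_le_one_of_le₀ hD1 hD0.le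
  · show u / D ≤ 1 / D
    rw [div_le_div_iff₀ hD0 hD0]; nlinarith
  · positivity
  · have : 1 - 1 / D - (k : ℝ) * (u / D) = v / D := by field_simp; ring
    rw [this]; positivity
  · have : 1 - 1 / D - ((k : ℝ) + 1) * (u / D) = (v - u) / D := by field_simp; ring
    rw [this]
    exact div_neg_of_neg_of_pos (by linarith) hD0
  · have h1 : (1 : ℝ) / D ≠ 0 := by positivity
    simp only [TmapK]
    have e1 : u / D / (1 / D) = u := by field_simp
    have e2 : (1 - 1 / D - (k : ℝ) * (u / D)) / (1 / D) = v := by field_simp; ring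
    rw [e1, e2]
  · rintro ⟨a, b⟩ hp heq
    have ha : 0 < a := triK_pos hp
    simp only [TmapK, Prod.mk.injEq] at heq
    obtain ⟨e1, e2⟩ := heq
    have hb : b = u * a := by field_simp at e1; linarith
    have h2 : 1 - a - (k : ℝ) * b = v * a := by field_simp at e2; linarith
    have haD : a * D = 1 := by rw [hD]; nlinarith
    have haD' : a = 1 / D := by field_simp; nlinarith
    have : b = u / D := by rw [hb, haD']; ring
    simp [haD', this]

/-- T restricted to △ₖ is a bijection onto {(u,v) : 1 ≥ u > v ≥ 0}; explicitly, the
unique preimage of (u,v) is (α,β) with α = 1/(1+v+ku) and β = u/(1+v+ku). -/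
theorem stmt_6 (k : ℕ) :
    Set.BijOn (TmapK k) (TriK k) {p : ℝ × ℝ | p.1 ≤ 1 ∧ p.2 < p.1 ∧ 0 ≤ p.2} ∧
    ∀ u v : ℝ, u ≤ 1 → v < u → 0 ≤ v →
      (1 / (1 + v + (k : ℝ) * u), u / (1 + v + (k : ℝ) * u)) ∈ TriK k ∧
      TmapK k (1 / (1 + v + (k : ℝ) * u), u / (1 + v + (k : ℝ) * u)) = (u, v) ∧
      ∀ p ∈ TriK k, TmapK k p = (u, v) →
        p = (1 / (1 + v + (k : ℝ) * u), u / (1 + v + (k : ℝ) * u)) := by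
  refine ⟨⟨tmap_maps k, ?_, ?_⟩, tmap_key k⟩
  · intro p hp q hq heq
    have himg := tmap_maps k p hp
    obtain ⟨h1, h2, h3⟩ := himg
    obtain ⟨-, -, huniq⟩ := tmap_key k (TmapK k p).1 (TmapK k p).2 h1 h2 h3
    have hp1 := huniq p hp rfl
    have hq1 := huniq q hq heq.symm
    rw [hp1, hq1]
  · rintro ⟨u, v⟩ ⟨h1, h2, h3⟩
    obtain ⟨hmem, heq, -⟩ := tmap_key k u v h1 h2 h3
    exact ⟨_, hmem, heq⟩
end

section
/- For each nonnegative integer k, the topological closure of △_k in ℝ² equals the convex hull of the three points (1,0), (1/(k+1), 1/(k+1)), and (1/(k+2), 1/(k+2)). -/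
/-- The topological closure of △ₖ equals the convex hull of the three points
(1,0), (1/(k+1), 1/(k+1)) and (1/(k+2), 1/(k+2)). -/
theorem stmt_8 (k : ℕ) :
    closure (TriK k) =
      convexHull ℝ {((1 : ℝ), (0 : ℝ)),
        (1 / ((k : ℝ) + 1), 1 / ((k : ℝ) + 1)),
        (1 / ((k : ℝ) + 2), 1 / ((k : ℝ) + 2))} := by
  set K := (k : ℝ) with hKdef
  have hK : (0:ℝ) ≤ K := Nat.cast_nonneg k
  have hK1 : (0:ℝ) < K + 1 := by positivity
  have hK2 : (0:ℝ) < K + 2 := by positivity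
  set a : ℝ × ℝ := ((1 : ℝ), (0 : ℝ)) with ha
  set b : ℝ × ℝ := (1 / (K + 1), 1 / (K + 1)) with hb
  set c : ℝ × ℝ := (1 / (K + 2), 1 / (K + 2)) with hc
  set S : Set (ℝ × ℝ) :=
    {p | p.2 ≤ p.1 ∧ p.1 + K * p.2 ≤ 1 ∧ 1 ≤ p.1 + (K + 1) * p.2} with hS
  -- S is convex
  have hSconv : Convex ℝ S := by
    intro p hp q hq u v hu hv huv
    obtain ⟨h1, h2, h3⟩ := hp
    obtain ⟨h1', h2', h3'⟩ := hq
    refine ⟨?_, ?_, ?_⟩ <;>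
      simp only [Prod.fst_add, Prod.snd_add, Prod.smul_fst, Prod.smul_snd, smul_eq_mul] <;>
      nlinarith
  -- S is closed
  have hSclosed : IsClosed S := by
    have : S = {p : ℝ × ℝ | p.2 ≤ p.1} ∩ {p | p.1 + K * p.2 ≤ 1} ∩
        {p | 1 ≤ p.1 + (K + 1) * p.2} := by
      ext p; simp only [hS, Set.mem_setOf_eq, Set.mem_inter_iff]; tauto
    rw [this]
    exact ((isClosed_le continuous_snd continuous_fst).inter
      (isClosed_le (continuous_fst.add (continuous_const.mul continuous_snd)) continuous_const)).inter
      (isClosed_le continuous_const (continuous_fst.add (continuous_const.mul continuous_snd)))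
  -- TriK ⊆ S
  have hTS : TriK k ⊆ S := by
    rintro p ⟨⟨hx1, hxy, hy⟩, hf1, hf2⟩
    exact ⟨hxy, by linarith, by linarith⟩
  -- vertices in S
  have haS : a ∈ S := ⟨by norm_num [ha], by norm_num [ha], by norm_num [ha]⟩
  have hbS : b ∈ S := by
    refine ⟨le_refl _, ?_, ?_⟩ <;> simp only [hb]
    · rw [mul_one_div, ← add_div, div_le_one hK1]; linarith
    · rw [mul_one_div, ← add_div, le_div_iff₀ hK1]; linarith
  have hcS : c ∈ S := by
    refine ⟨le_refl _, ?_, ?_⟩ <;> simp only [hc]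
    · rw [mul_one_div, ← add_div, div_le_one hK2]; linarith
    · rw [mul_one_div, ← add_div, le_div_iff₀ hK2]; linarith
  -- convexHull ⊆ S
  have hHullS : convexHull ℝ {a, b, c} ⊆ S := by
    apply convexHull_min _ hSconv
    rintro p (rfl | rfl | rfl)
    exacts [haS, hbS, hcS]
  -- membership lemma for convex combinations of a,b,c
  have hmem : ∀ w₁ w₂ w₃ : ℝ, 0 ≤ w₁ → 0 ≤ w₂ → 0 ≤ w₃ → w₁ + w₂ + w₃ = 1 →
      w₁ • a + w₂ • b + w₃ • c ∈ convexHull ℝ ({a, b, c} : Set (ℝ × ℝ)) := by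
    intro w₁ w₂ w₃ h1 h2 h3 hsum
    have := (convex_convexHull ℝ ({a, b, c} : Set (ℝ × ℝ))).sum_mem
      (t := (Finset.univ : Finset (Fin 3))) (w := ![w₁, w₂, w₃]) (z := ![a, b, c])
      (by intro i _; fin_cases i <;> simpa) (by simp [Fin.sum_univ_three]; linarith)
      (by intro i _; fin_cases i <;>
        simp [subset_convexHull ℝ ({a, b, c} : Set (ℝ × ℝ)) (by simp : a ∈ ({a,b,c} : Set (ℝ×ℝ))),
          subset_convexHull ℝ ({a, b, c} : Set (ℝ × ℝ)) (by simp : b ∈ ({a,b,c} : Set (ℝ×ℝ))),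
          subset_convexHull ℝ ({a, b, c} : Set (ℝ × ℝ)) (by simp : c ∈ ({a,b,c} : Set (ℝ×ℝ)))])
    simpa [Fin.sum_univ_three] using this
  -- S ⊆ convexHull
  have hSHull : S ⊆ convexHull ℝ {a, b, c} := by
    rintro p ⟨h1, h2, h3⟩
    have hy0 : 0 ≤ p.2 := by nlinarith
    set w₁ : ℝ := p.1 - p.2 with hw1
    set w₂ : ℝ := (K + 1) * (p.1 + (K + 1) * p.2 - 1) with hw2
    set w₃ : ℝ := (K + 2) * (1 - p.1 - K * p.2) with hw3
    have hsum : w₁ + w₂ + w₃ = 1 := by simp only [hw1, hw2, hw3]; ring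
    have hpe : p = w₁ • a + w₂ • b + w₃ • c := by
      have h1' : (K + 1) ≠ 0 := ne_of_gt hK1
      have h2' : (K + 2) ≠ 0 := ne_of_gt hK2
      ext
      · simp only [Prod.fst_add, Prod.smul_fst, smul_eq_mul, ha, hb, hc, hw1, hw2, hw3]
        field_simp
        ring
      · simp only [Prod.snd_add, Prod.smul_snd, smul_eq_mul, ha, hb, hc, hw1, hw2, hw3]
        field_simp
        ring
    rw [hpe]
    exact hmem w₁ w₂ w₃ (by linarith) (by nlinarith) (by nlinarith) hsum
  -- S ⊆ closure TriK
  have hSclT : S ⊆ closure (TriK k) := by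
    rintro p ⟨h1, h2, h3⟩
    have hy0 : 0 ≤ p.2 := by nlinarith
    have hx1 : p.1 ≤ 1 := by nlinarith
    set t₀ : ℝ := (2 * K + 3) / (2 * (K + 1) * (K + 2)) with ht₀
    have hden : (0:ℝ) < 2 * (K + 1) * (K + 2) := by positivity
    have ht₀pos : 0 < t₀ := by positivity
    have hA : 1 < (K + 2) * t₀ := by
      rw [ht₀, ← mul_div_assoc, lt_div_iff₀ hden]
      nlinarith
    have hB : (K + 1) * t₀ < 1 := by
      rw [ht₀, ← mul_div_assoc, div_lt_one hden]
      nlinarith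
    have ht₀le : t₀ ≤ 1 := by nlinarith
    -- sequence tending to p inside TriK
    have hu : Filter.Tendsto (fun n : ℕ => (1:ℝ) / (n + 1)) Filter.atTop (nhds 0) :=
      tendsto_one_div_add_atTop_nhds_zero_nat
    have htend : Filter.Tendsto (fun n : ℕ => p + ((1:ℝ) / (n + 1)) • ((t₀, t₀) - p))
        Filter.atTop (nhds p) := by
      have := Filter.Tendsto.add (tendsto_const_nhds (x := p))
        (Filter.Tendsto.smul hu (tendsto_const_nhds (x := ((t₀, t₀) : ℝ × ℝ) - p)))
      simpa using this
    refine mem_closure_of_tendsto htend (Filter.Eventually.of_forall fun n => ?_)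
    have htn0 : 0 < (1:ℝ) / (n + 1) := by positivity
    have htn1 : (1:ℝ) / (n + 1) ≤ 1 := by
      rw [div_le_one (by positivity)]; linarith [Nat.cast_nonneg (α := ℝ) n]
    set t : ℝ := (1:ℝ) / (n + 1) with htdef
    have hcomp : p + t • ((t₀, t₀) - p) =
        (p.1 + t * (t₀ - p.1), p.2 + t * (t₀ - p.2)) := by
      ext <;> simp [Prod.smul_fst, Prod.smul_snd, smul_eq_mul]
    rw [hcomp]
    have e1 : (0:ℝ) ≤ 1 - t := by linarith
    have g1a : 0 ≤ (1 - t) * (1 - p.1) := mul_nonneg e1 (by linarith)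
    have g1b : 0 ≤ t * (1 - t₀) := mul_nonneg htn0.le (by linarith)
    have g2a : 0 ≤ (1 - t) * (p.1 - p.2) := mul_nonneg e1 (by linarith)
    have g3a : 0 ≤ (1 - t) * p.2 := mul_nonneg e1 hy0
    have g3b : 0 < t * t₀ := mul_pos htn0 ht₀pos
    have g4a : 0 ≤ (1 - t) * (1 - p.1 - K * p.2) := mul_nonneg e1 (by linarith)
    have g4b : 0 ≤ t * (1 - (K + 1) * t₀) := mul_nonneg htn0.le (by linarith)
    have g5a : (1 - t) * (1 - p.1 - (K + 1) * p.2) ≤ 0 :=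
      mul_nonpos_of_nonneg_of_nonpos e1 (by linarith)
    have g5b : t * (1 - (K + 2) * t₀) < 0 := mul_neg_of_pos_of_neg htn0 (by linarith)
    clear hmem hSHull hSconv hSclosed hTS hHullS haS hbS hcS hu htend hcomp
    simp only [TriK, Tri, Set.mem_setOf_eq]
    refine ⟨⟨?_, ?_, ?_⟩, ?_, ?_⟩
    · linarith [g1a, g1b]
    · linarith [g2a]
    · linarith [g3a, g3b]
    · linarith [g4a, g4b]
    · linarith [g5a, g5b]
  -- conclude
  apply Set.Subset.antisymm
  · exact (closure_minimal hTS hSclosed).trans hSHull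
  · rw [← Set.image_id (convexHull ℝ {a, b, c})] at *
    exact (hHullS.trans hSclT).trans (le_refl _)
end

section
/- Let (k_1, k_2, k_3, …) be an infinite sequence of nonnegative integers in which some integer occurs infinitely often. Then there is exactly one pair (α,β) ∈ △ whose triangle sequence is nonterminating and equals (k_1, k_2, k_3, …). -/
noncomputable def eS (b : ℕ → ℕ) (α β : ℝ) : ℕ → ℝ
  | 0 => 1
  | 1 => α
  | 2 => β
  | (k+3) => eS b α β k - eS b α β (k+1) - (b k : ℝ) * eS b α β (k+2)

variable {b : ℕ → ℕ} {α β : ℝ}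

lemma eS_rec (k : ℕ) :
    eS b α β (k+3) = eS b α β k - eS b α β (k+1) - (b k : ℝ) * eS b α β (k+2) := by
  rfl

/-- nonneg everywhere implies strictly positive everywhere -/
lemma eS_pos (h : ∀ k, 0 ≤ eS b α β k) : ∀ k, 0 < eS b α β k := by
  -- weak decrease
  have hdec : ∀ k, eS b α β (k+1) ≤ eS b α β k := by
    intro k
    have h3 := h (k+3)
    rw [eS_rec] at h3
    have h2 := h (k+2)
    have hb0 : (0:ℝ) ≤ (b k : ℝ) := Nat.cast_nonneg _
    nlinarith
  have hzero : ∀ j, eS b α β j = 0 → eS b α β (j+1) = 0 := by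
    intro j hj
    have := hdec j
    have := h (j+1)
    linarith
  intro k
  induction k with
  | zero => norm_num [eS]
  | succ n ih =>
    rcases lt_or_eq_of_le (h (n+1)) with hlt | heq
    · exact hlt
    · exfalso
      have h1 : eS b α β (n+1) = 0 := heq.symm
      have h2 : eS b α β (n+2) = 0 := hzero _ h1
      have h3 : eS b α β (n+3) = 0 := hzero _ h2
      have := eS_rec (b := b) (α := α) (β := β) n
      rw [h3, h1, h2] at this
      simp at this
      linarith

lemma eS_strict (h : ∀ k, 0 ≤ eS b α β k) : ∀ k, eS b α β (k+1) < eS b α β k := by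
  intro k
  have h3 := eS_pos h (k+3)
  rw [eS_rec] at h3
  have h2 := h (k+2)
  have hb0 : (0:ℝ) ≤ (b k : ℝ) := Nat.cast_nonneg _
  nlinarith

lemma eS_floor (h : ∀ k, 0 ≤ eS b α β k) (k : ℕ) :
    ⌊(eS b α β k - eS b α β (k+1)) / eS b α β (k+2)⌋ = (b k : ℤ) := by
  have h2 := eS_pos h (k+2)
  have h3 := h (k+3)
  have h3' := eS_strict h (k+2)
  rw [eS_rec] at h3
  have hub : eS b α β (k+3) < eS b α β (k+2) := h3'
  rw [eS_rec] at hub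
  rw [Int.floor_eq_iff]
  constructor
  · rw [le_div_iff₀ h2]
    push_cast
    linarith
  · rw [div_lt_iff₀ h2]
    push_cast
    linarith

/-- direction →: conditions imply triD = eS -/
lemma triD_eq_eS_of (hpos : ∀ k, 0 < triD α β k) (ha : ∀ n, triA α β n = b n) :
    ∀ k, triD α β k = eS b α β k := by
  intro k
  induction k using Nat.strong_induction_on with
  | _ k ih =>
    match k with
    | 0 => rfl
    | 1 => rfl
    | 2 => rfl
    | (k+3) =>
      have e0 := ih k (by omega)
      have e1 := ih (k+1) (by omega)
      have e2 := ih (k+2) (by omega)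
      have hA := ha k
      unfold triA at hA
      rw [triD, if_pos (hpos (k+2)), hA, eS_rec, e0, e1, e2]

/-- direction ←: nonneg-solution implies all the conditions -/
lemma conds_of_eS (h : ∀ k, 0 ≤ eS b α β k) :
    (α, β) ∈ Tri ∧ (∀ k, 0 < triD α β k) ∧ ∀ n, triA α β n = b n := by
  have hDe : ∀ k, triD α β k = eS b α β k := by
    intro k
    induction k using Nat.strong_induction_on with
    | _ k ih =>
      match k with
      | 0 => rfl
      | 1 => rfl
      | 2 => rfl
      | (k+3) =>
        have e0 := ih k (by omega)
        have e1 := ih (k+1) (by omega)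
        have e2 := ih (k+2) (by omega)
        have h2 : 0 < triD α β (k+2) := by rw [e2]; exact eS_pos h (k+2)
        rw [triD, if_pos h2, e0, e1, e2, eS_floor h k]
        rw [eS_rec]
        norm_num
  refine ⟨⟨?_, ?_, ?_⟩, ?_, ?_⟩
  · have := eS_strict h 0
    simp only [eS] at this
    exact this.le
  · have := eS_strict h 1
    simp only [eS] at this
    exact this.le
  · exact eS_pos h 2
  · intro k
    rw [hDe]
    exact eS_pos h k
  · intro n
    unfold triA
    rw [hDe n, hDe (n+1), hDe (n+2), eS_floor h n]
    rfl
noncomputable def recS (b : ℕ → ℕ) (c0 c1 c2 : ℝ) : ℕ → ℝ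
  | 0 => c0
  | 1 => c1
  | 2 => c2
  | (n+3) => recS b c0 c1 c2 (n+2) + (b (n+1) : ℝ) * recS b c0 c1 c2 (n+1) + recS b c0 c1 c2 n

lemma recS_rec (b : ℕ → ℕ) (c0 c1 c2 : ℝ) (n : ℕ) :
    recS b c0 c1 c2 (n+3) =
      recS b c0 c1 c2 (n+2) + (b (n+1) : ℝ) * recS b c0 c1 c2 (n+1) + recS b c0 c1 c2 n := rfl

noncomputable def tS (b : ℕ → ℕ) : ℕ → ℝ := recS b 1 1 (1 + b 0)

lemma tS_ge_one (b : ℕ → ℕ) : ∀ n, 1 ≤ tS b n := by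
  intro n
  induction n using Nat.strong_induction_on with
  | _ n ih =>
    match n with
    | 0 => simp [tS, recS]
    | 1 => simp [tS, recS]
    | 2 =>
      have : (0:ℝ) ≤ (b 0 : ℝ) := Nat.cast_nonneg _
      simp only [tS, recS]; linarith
    | (n+3) =>
      have h2 := ih (n+2) (by omega)
      have h1 := ih (n+1) (by omega)
      have h0 := ih n (by omega)
      have hb : (0:ℝ) ≤ (b (n+1) : ℝ) := Nat.cast_nonneg _
      simp only [tS, recS_rec] at *
      nlinarith

lemma tS_pos (b : ℕ → ℕ) (n : ℕ) : 0 < tS b n := lt_of_lt_of_le one_pos (tS_ge_one b n)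

lemma tS_mono (b : ℕ → ℕ) : ∀ n, tS b n ≤ tS b (n+1) := by
  intro n
  match n with
  | 0 => simp [tS, recS]
  | 1 =>
    have : (0:ℝ) ≤ (b 0 : ℝ) := Nat.cast_nonneg _
    simp only [tS, recS]; linarith
  | (n+2) =>
    have h1 := tS_ge_one b (n+1)
    have h0 := tS_ge_one b n
    have hb : (0:ℝ) ≤ (b (n+1) : ℝ) := Nat.cast_nonneg _
    show tS b (n+2) ≤ tS b (n+3)
    rw [show tS b (n+3) = tS b (n+2) + (b (n+1) : ℝ) * tS b (n+1) + tS b n from rfl]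
    nlinarith

lemma tS_mono' (b : ℕ → ℕ) {n m : ℕ} (h : n ≤ m) : tS b n ≤ tS b m := by
  induction m with
  | zero => simp_all
  | succ m ih =>
    rcases Nat.lt_or_ge n (m+1) with h' | h'
    · exact le_trans (ih (by omega)) (tS_mono b m)
    · have : n = m + 1 := by omega
      simp [this]

/-- the fundamental identity: the quantity J is constant in n -/
lemma J_const (b : ℕ → ℕ) (α β c0 c1 c2 : ℝ) :
    ∀ n,
      eS b α β (n+2) * recS b c0 c1 c2 (n+2)
        + ((b (n+1) : ℝ) * eS b α β (n+3) + eS b α β (n+4)) * recS b c0 c1 c2 (n+1)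
        + eS b α β (n+3) * recS b c0 c1 c2 n
      = β * c2 + ((b 1 : ℝ) * eS b α β 3 + eS b α β 4) * c1 + eS b α β 3 * c0 := by
  intro n
  induction n with
  | zero => rfl
  | succ n ih =>
    rw [← ih]
    rw [show eS b α β (n+1+4) = eS b α β (n+2) - eS b α β (n+3) - (b (n+2) : ℝ) * eS b α β (n+4) from rfl]
    rw [show recS b c0 c1 c2 (n+3) =
      recS b c0 c1 c2 (n+2) + (b (n+1) : ℝ) * recS b c0 c1 c2 (n+1) + recS b c0 c1 c2 n from rfl]
    ring

section contraction

variable (φ P Q R : ℕ → ℝ)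

/-- diameter of a triple -/
noncomputable def Dm (n : ℕ) : ℝ :=
  max (|φ (n+1) - φ n|) (max (|φ (n+2) - φ (n+1)|) (|φ (n+2) - φ n|))

variable {φ P Q R}
variable (hP : ∀ n, 0 ≤ P n) (hQ : ∀ n, 0 ≤ Q n) (hR : ∀ n, 0 ≤ R n)
  (hsum : ∀ n, P n + Q n + R n = 1)
  (hrec : ∀ n, φ (n+3) = P n * φ (n+2) + Q n * φ (n+1) + R n * φ n)

lemma Dm_nonneg (n : ℕ) : 0 ≤ Dm φ n :=
  le_trans (abs_nonneg _) (le_max_left _ _)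

/-- generic bound for a combination c1*(u) + c2*(v) with |u|,|v| ≤ bounds -/
lemma comb_bound {c1 c2 u v B1 B2 : ℝ} (hc1 : 0 ≤ c1) (hc2 : 0 ≤ c2)
    (hu : |u| ≤ B1) (hv : |v| ≤ B2) :
    |c1 * u + c2 * v| ≤ c1 * B1 + c2 * B2 := by
  calc |c1 * u + c2 * v| ≤ |c1 * u| + |c2 * v| := abs_add_le _ _
    _ = c1 * |u| + c2 * |v| := by rw [abs_mul, abs_mul, abs_of_nonneg hc1, abs_of_nonneg hc2]
    _ ≤ c1 * B1 + c2 * B2 :=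
        add_le_add (mul_le_mul_of_nonneg_left hu hc1) (mul_le_mul_of_nonneg_left hv hc2)

include hP hQ hR hsum hrec

lemma step1 (n : ℕ) : |φ (n+3) - φ (n+2)| ≤ (Q n + R n) * Dm φ n := by
  have e : φ (n+3) - φ (n+2) = Q n * (φ (n+1) - φ (n+2)) + R n * (φ n - φ (n+2)) := by
    rw [hrec n]; linear_combination (φ (n+2)) * hsum n
  rw [e]
  have b1 : |φ (n+1) - φ (n+2)| ≤ Dm φ n := by
    rw [abs_sub_comm]; exact le_trans (le_max_left _ _) (le_max_right _ _)
  have b2 : |φ n - φ (n+2)| ≤ Dm φ n := by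
    rw [abs_sub_comm]; exact le_trans (le_max_right _ _) (le_max_right _ _)
  refine le_trans (comb_bound (hQ n) (hR n) b1 b2) ?_
  linarith [mul_le_mul_of_nonneg_left (le_refl (Dm φ n)) (hQ n)]

lemma step2 (n : ℕ) : |φ (n+3) - φ (n+1)| ≤ Dm φ n := by
  have e : φ (n+3) - φ (n+1) = P n * (φ (n+2) - φ (n+1)) + R n * (φ n - φ (n+1)) := by
    rw [hrec n]; linear_combination (φ (n+1)) * hsum n
  rw [e]
  have b1 : |φ (n+2) - φ (n+1)| ≤ Dm φ n := le_trans (le_max_left _ _) (le_max_right _ _)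
  have b2 : |φ n - φ (n+1)| ≤ Dm φ n := by
    rw [abs_sub_comm]; exact le_max_left _ _
  refine le_trans (comb_bound (hP n) (hR n) b1 b2) ?_
  have hPR : P n + R n ≤ 1 := by linarith [hsum n, hQ n]
  nlinarith [Dm_nonneg (φ := φ) n, hP n, hR n]

lemma step3 (n : ℕ) : |φ (n+3) - φ n| ≤ Dm φ n := by
  have e : φ (n+3) - φ n = P n * (φ (n+2) - φ n) + Q n * (φ (n+1) - φ n) := by
    rw [hrec n]; linear_combination (φ n) * hsum n
  rw [e]
  have b1 : |φ (n+2) - φ n| ≤ Dm φ n := le_trans (le_max_right _ _) (le_max_right _ _)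
  have b2 : |φ (n+1) - φ n| ≤ Dm φ n := le_max_left _ _
  refine le_trans (comb_bound (hP n) (hQ n) b1 b2) ?_
  have hPQ : P n + Q n ≤ 1 := by linarith [hsum n, hR n]
  nlinarith [Dm_nonneg (φ := φ) n, hP n, hQ n]

lemma Dm_mono (n : ℕ) : Dm φ (n+1) ≤ Dm φ n := by
  have h1 : |φ (n+2) - φ (n+1)| ≤ Dm φ n := le_trans (le_max_left _ _) (le_max_right _ _)
  have h2 : |φ (n+3) - φ (n+2)| ≤ Dm φ n := by
    refine le_trans (step1 hP hQ hR hsum hrec n) ?_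
    have hQR : Q n + R n ≤ 1 := by linarith [hsum n, hP n]
    nlinarith [Dm_nonneg (φ := φ) n, hQ n, hR n]
  have h3 : |φ (n+3) - φ (n+1)| ≤ Dm φ n := step2 hP hQ hR hsum hrec n
  exact max_le h1 (max_le h2 h3)

lemma Dm_mono' {n m : ℕ} (h : n ≤ m) : Dm φ m ≤ Dm φ n := by
  induction m with
  | zero => simp_all
  | succ m ih =>
    rcases Nat.lt_or_ge n (m+1) with h' | h'
    · exact le_trans (Dm_mono hP hQ hR hsum hrec m) (ih (by omega))
    · have : n = m + 1 := by omega
      simp [this]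

lemma Dm_contract {κ : ℝ} (hκ0 : 0 ≤ κ) (hκ1 : κ ≤ 1) {n : ℕ} (hn : Q n + R n ≤ κ)
    (hRhalf : R (n+1) ≤ 1/2) :
    Dm φ (n+2) ≤ (1+κ)/2 * Dm φ n := by
  have hD0 := Dm_nonneg (φ := φ) n
  have hrec' := hrec (n+1)
  have i1 : n+1+2 = n+3 := by omega
  have i2 : n+1+1 = n+2 := by omega
  have i3 : n+1+3 = n+4 := by omega
  rw [i1, i2, i3] at hrec'
  have key1 : |φ (n+3) - φ (n+2)| ≤ κ * Dm φ n := by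
    refine le_trans (step1 hP hQ hR hsum hrec n) ?_
    exact mul_le_mul_of_nonneg_right hn hD0
  have key2 : |φ (n+1) - φ (n+3)| ≤ Dm φ n := by
    rw [abs_sub_comm]; exact step2 hP hQ hR hsum hrec n
  have hcoef : Q (n+1) * κ + R (n+1) ≤ (1+κ)/2 := by
    have h1 : (0:ℝ) ≤ (1-κ) * (1/2 - R (n+1)) :=
      mul_nonneg (by linarith) (by linarith)
    have h2 : (0:ℝ) ≤ κ * (1 - R (n+1) - Q (n+1)) :=
      mul_nonneg hκ0 (by linarith [hsum (n+1), hP (n+1)])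
    nlinarith
  have hcoef' : P (n+1) * κ + R (n+1) ≤ (1+κ)/2 := by
    have h1 : (0:ℝ) ≤ (1-κ) * (1/2 - R (n+1)) :=
      mul_nonneg (by linarith) (by linarith)
    have h2 : (0:ℝ) ≤ κ * (1 - R (n+1) - P (n+1)) :=
      mul_nonneg hκ0 (by linarith [hsum (n+1), hQ (n+1)])
    nlinarith
  have key3 : |φ (n+4) - φ (n+3)| ≤ (1+κ)/2 * Dm φ n := by
    have e4 : φ (n+4) - φ (n+3)
        = Q (n+1) * (φ (n+2) - φ (n+3)) + R (n+1) * (φ (n+1) - φ (n+3)) := by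
      rw [hrec']; linear_combination (φ (n+3)) * hsum (n+1)
    rw [e4]
    have c1 : |φ (n+2) - φ (n+3)| ≤ κ * Dm φ n := by rw [abs_sub_comm]; exact key1
    refine le_trans (comb_bound (hQ (n+1)) (hR (n+1)) c1 key2) ?_
    calc Q (n+1) * (κ * Dm φ n) + R (n+1) * Dm φ n
        = (Q (n+1) * κ + R (n+1)) * Dm φ n := by ring
      _ ≤ (1+κ)/2 * Dm φ n := mul_le_mul_of_nonneg_right hcoef hD0
  have key4 : |φ (n+4) - φ (n+2)| ≤ (1+κ)/2 * Dm φ n := by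
    have e5 : φ (n+4) - φ (n+2)
        = P (n+1) * (φ (n+3) - φ (n+2)) + R (n+1) * (φ (n+1) - φ (n+2)) := by
      rw [hrec']; linear_combination (φ (n+2)) * hsum (n+1)
    rw [e5]
    have c2 : |φ (n+1) - φ (n+2)| ≤ Dm φ n := by
      rw [abs_sub_comm]; exact le_trans (le_max_left _ _) (le_max_right _ _)
    refine le_trans (comb_bound (hP (n+1)) (hR (n+1)) key1 c2) ?_
    calc P (n+1) * (κ * Dm φ n) + R (n+1) * Dm φ n
        = (P (n+1) * κ + R (n+1)) * Dm φ n := by ring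
      _ ≤ (1+κ)/2 * Dm φ n := mul_le_mul_of_nonneg_right hcoef' hD0
  have key1' : |φ (n+3) - φ (n+2)| ≤ (1+κ)/2 * Dm φ n := by
    refine le_trans key1 ?_
    exact mul_le_mul_of_nonneg_right (by linarith) hD0
  exact max_le key1' (max_le key3 key4)

lemma Dm_small {κ : ℝ} (hκ0 : 0 ≤ κ) (hκ1 : κ < 1)
    (hRhalf : ∀ n, R n ≤ 1/2)
    (hinf : ∀ N, ∃ n, N ≤ n ∧ Q n + R n ≤ κ) :
    ∀ j : ℕ, ∃ n, Dm φ n ≤ ((1+κ)/2)^j * Dm φ 0 := by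
  intro j
  induction j with
  | zero => exact ⟨0, by simp⟩
  | succ j ih =>
    obtain ⟨n, hn⟩ := ih
    obtain ⟨n', hn', hc⟩ := hinf n
    refine ⟨n' + 2, ?_⟩
    have h1 := Dm_contract hP hQ hR hsum hrec hκ0 hκ1.le hc (hRhalf (n'+1))
    have h2 : Dm φ n' ≤ Dm φ n := Dm_mono' hP hQ hR hsum hrec hn'
    have hγ : (0:ℝ) ≤ (1+κ)/2 := by linarith
    have hγj : (0:ℝ) ≤ ((1+κ)/2)^j := pow_nonneg hγ j
    calc Dm φ (n'+2) ≤ (1+κ)/2 * Dm φ n' := h1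
      _ ≤ (1+κ)/2 * (((1+κ)/2)^j * Dm φ 0) := by
          refine mul_le_mul_of_nonneg_left (le_trans h2 hn) hγ
      _ = ((1+κ)/2)^(j+1) * Dm φ 0 := by ring

end contraction

lemma tS_rec (b : ℕ → ℕ) (n : ℕ) :
    tS b (n+3) = tS b (n+2) + (b (n+1) : ℝ) * tS b (n+1) + tS b n := rfl

/-- convex-combination interval bound -/
lemma triple_conv {u v w D : ℝ} {w1 w2 w3 w1' w2' w3' : ℝ}
    (h1 : 0 ≤ w1) (h2 : 0 ≤ w2) (h3 : 0 ≤ w3)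
    (h1' : 0 ≤ w1') (h2' : 0 ≤ w2') (h3' : 0 ≤ w3')
    (hs : w1 + w2 + w3 = 1) (hs' : w1' + w2' + w3' = 1)
    (hD1 : |v - u| ≤ D) (hD2 : |w - v| ≤ D) (hD3 : |w - u| ≤ D) :
    |(w1*w + w2*v + w3*u) - (w1'*w + w2'*v + w3'*u)| ≤ D := by
  have hDnn : 0 ≤ D := le_trans (abs_nonneg _) hD1
  obtain ⟨e1, e1'⟩ := abs_le.1 hD1
  obtain ⟨e2, e2'⟩ := abs_le.1 hD2
  obtain ⟨e3, e3'⟩ := abs_le.1 hD3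
  set hi := max u (max v w) with hhi
  set lo := min u (min v w) with hlo
  have hu_hi : u ≤ hi := le_max_left _ _
  have hv_hi : v ≤ hi := le_trans (le_max_left _ _) (le_max_right _ _)
  have hw_hi : w ≤ hi := le_trans (le_max_right _ _) (le_max_right _ _)
  have hu_lo : lo ≤ u := min_le_left _ _
  have hv_lo : lo ≤ v := le_trans (min_le_right _ _) (min_le_left _ _)
  have hw_lo : lo ≤ w := le_trans (min_le_right _ _) (min_le_right _ _)
  have key : hi ≤ lo + D := by
    have hu' : u ≤ lo + D := by
      rcases min_cases u (min v w) with ⟨h', _⟩ | ⟨h', _⟩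
      · rw [hlo, h']; linarith
      · rcases min_cases v w with ⟨h, _⟩ | ⟨h, _⟩
        · rw [hlo, h', h]; linarith
        · rw [hlo, h', h]; linarith
    have hv' : v ≤ lo + D := by
      rcases min_cases u (min v w) with ⟨h', _⟩ | ⟨h', _⟩
      · rw [hlo, h']; linarith
      · rcases min_cases v w with ⟨h, _⟩ | ⟨h, _⟩
        · rw [hlo, h', h]; linarith
        · rw [hlo, h', h]; linarith
    have hw' : w ≤ lo + D := by
      rcases min_cases u (min v w) with ⟨h', _⟩ | ⟨h', _⟩
      · rw [hlo, h']; linarith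
      · rcases min_cases v w with ⟨h, _⟩ | ⟨h, _⟩
        · rw [hlo, h', h]; linarith
        · rw [hlo, h', h]; linarith
    exact max_le hu' (max_le hv' hw')
  have bnd : ∀ {a1 a2 a3 : ℝ}, 0 ≤ a1 → 0 ≤ a2 → 0 ≤ a3 → a1 + a2 + a3 = 1 →
      lo ≤ a1*w + a2*v + a3*u ∧ a1*w + a2*v + a3*u ≤ hi := by
    intro a1 a2 a3 ha1 ha2 ha3 has
    constructor
    · have c1 : a1 * lo ≤ a1 * w := mul_le_mul_of_nonneg_left hw_lo ha1
      have c2 : a2 * lo ≤ a2 * v := mul_le_mul_of_nonneg_left hv_lo ha2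
      have c3 : a3 * lo ≤ a3 * u := mul_le_mul_of_nonneg_left hu_lo ha3
      have : a1 * lo + a2 * lo + a3 * lo = lo := by
        rw [← add_mul, ← add_mul, has, one_mul]
      linarith
    · have c1 : a1 * w ≤ a1 * hi := mul_le_mul_of_nonneg_left hw_hi ha1
      have c2 : a2 * v ≤ a2 * hi := mul_le_mul_of_nonneg_left hv_hi ha2
      have c3 : a3 * u ≤ a3 * hi := mul_le_mul_of_nonneg_left hu_hi ha3
      have : a1 * hi + a2 * hi + a3 * hi = hi := by
        rw [← add_mul, ← add_mul, has, one_mul]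
      linarith
  obtain ⟨l1, r1⟩ := bnd h1 h2 h3 hs
  obtain ⟨l2, r2⟩ := bnd h1' h2' h3' hs'
  rw [abs_le]
  constructor <;> linarith

section uniq

variable {b : ℕ → ℕ}

noncomputable def Pw (b : ℕ → ℕ) (n : ℕ) : ℝ := tS b (n+2) / tS b (n+3)
noncomputable def Qw (b : ℕ → ℕ) (n : ℕ) : ℝ := (b (n+1) : ℝ) * tS b (n+1) / tS b (n+3)
noncomputable def Rw (b : ℕ → ℕ) (n : ℕ) : ℝ := tS b n / tS b (n+3)

lemma Pw_nonneg (n : ℕ) : 0 ≤ Pw b n := div_nonneg (tS_pos b _).le (tS_pos b _).le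
lemma Qw_nonneg (n : ℕ) : 0 ≤ Qw b n :=
  div_nonneg (mul_nonneg (Nat.cast_nonneg _) (tS_pos b _).le) (tS_pos b _).le
lemma Rw_nonneg (n : ℕ) : 0 ≤ Rw b n := div_nonneg (tS_pos b _).le (tS_pos b _).le

lemma PQRw_sum (n : ℕ) : Pw b n + Qw b n + Rw b n = 1 := by
  rw [Pw, Qw, Rw, ← add_div, ← add_div, ← tS_rec]
  exact div_self (tS_pos b (n+3)).ne'

lemma Rw_half (n : ℕ) : Rw b n ≤ 1/2 := by
  rw [Rw, div_le_iff₀ (tS_pos b _)]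
  have h1 : tS b n ≤ tS b (n+2) := tS_mono' b (by omega)
  have h2 : 0 ≤ (b (n+1) : ℝ) * tS b (n+1) :=
    mul_nonneg (Nat.cast_nonneg _) (tS_pos b _).le
  rw [tS_rec]
  linarith

lemma Qw_Rw_small {m : ℕ} {n : ℕ} (hbn : b (n+1) = m) :
    Qw b n + Rw b n ≤ ((m:ℝ)+1)/((m:ℝ)+2) := by
  rw [Qw, Rw, ← add_div, hbn]
  rw [div_le_div_iff₀ (tS_pos b _) (by positivity)]
  have h1 : tS b (n+1) ≤ tS b (n+2) := tS_mono' b (by omega)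
  have h2 : tS b n ≤ tS b (n+2) := tS_mono' b (by omega)
  have h3 : tS b (n+3) = tS b (n+2) + (m : ℝ) * tS b (n+1) + tS b n := by
    rw [tS_rec, hbn]
  have hm : (0:ℝ) ≤ (m:ℝ) := Nat.cast_nonneg _
  have h4 : (m:ℝ) * tS b (n+1) ≤ (m:ℝ) * tS b (n+2) :=
    mul_le_mul_of_nonneg_left h1 hm
  nlinarith [tS_pos b (n+2)]

lemma phi_rec (c0 c1 c2 : ℝ) (n : ℕ) :
    recS b c0 c1 c2 (n+3) / tS b (n+3)
      = Pw b n * (recS b c0 c1 c2 (n+2) / tS b (n+2))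
        + Qw b n * (recS b c0 c1 c2 (n+1) / tS b (n+1))
        + Rw b n * (recS b c0 c1 c2 n / tS b n) := by
  have h0 := (tS_pos b n).ne'
  have h1 := (tS_pos b (n+1)).ne'
  have h2 := (tS_pos b (n+2)).ne'
  have h3 := (tS_pos b (n+3)).ne'
  rw [Pw, Qw, Rw, recS_rec]
  field_simp

lemma J_t (α β : ℝ) (n : ℕ) :
    eS b α β (n+2) * tS b (n+2)
      + ((b (n+1) : ℝ) * eS b α β (n+3) + eS b α β (n+4)) * tS b (n+1)
      + eS b α β (n+3) * tS b n = 1 := by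
  have h := J_const b α β 1 1 (1 + (b 0 : ℝ)) n
  rw [show tS b = recS b 1 1 (1 + (b 0 : ℝ)) from rfl, h]
  rw [show eS b α β 4 = eS b α β 1 - eS b α β 2 - (b 1 : ℝ) * eS b α β 3 from rfl]
  rw [show eS b α β 3 = eS b α β 0 - eS b α β 1 - (b 0 : ℝ) * eS b α β 2 from rfl]
  simp only [eS]
  ring

lemma J_g1 (α β : ℝ) (n : ℕ) :
    eS b α β (n+2) * recS b 0 1 1 (n+2)
      + ((b (n+1) : ℝ) * eS b α β (n+3) + eS b α β (n+4)) * recS b 0 1 1 (n+1)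
      + eS b α β (n+3) * recS b 0 1 1 n = α := by
  rw [J_const b α β 0 1 1 n]
  rw [show eS b α β 4 = eS b α β 1 - eS b α β 2 - (b 1 : ℝ) * eS b α β 3 from rfl]
  simp only [eS]
  ring

lemma J_g2 (α β : ℝ) (n : ℕ) :
    eS b α β (n+2) * recS b 0 0 1 (n+2)
      + ((b (n+1) : ℝ) * eS b α β (n+3) + eS b α β (n+4)) * recS b 0 0 1 (n+1)
      + eS b α β (n+3) * recS b 0 0 1 n = β := by
  rw [J_const b α β 0 0 1 n]
  simp only [eS]
  ring

lemma uniq {m : ℕ} (hm : {n | b n = m}.Infinite) {p q : ℝ × ℝ}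
    (hp : ∀ k, 0 ≤ eS b p.1 p.2 k) (hq : ∀ k, 0 ≤ eS b q.1 q.2 k) : p = q := by
  set κ : ℝ := ((m:ℝ)+1)/((m:ℝ)+2) with hκdef
  have hκ0 : 0 ≤ κ := by positivity
  have hκ1 : κ < 1 := by
    rw [hκdef, div_lt_one (by positivity)]
    linarith
  have hγ0 : (0:ℝ) ≤ (1+κ)/2 := by linarith
  have hγ1 : (1+κ)/2 < 1 := by linarith
  have hinf : ∀ N, ∃ n, N ≤ n ∧ Qw b n + Rw b n ≤ κ := by
    intro N
    obtain ⟨j, hj, hjN⟩ := hm.exists_gt N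
    refine ⟨j - 1, by omega, ?_⟩
    have hbj : b (j - 1 + 1) = m := by
      have hj1 : j - 1 + 1 = j := by omega
      rw [hj1]; exact hj
    exact Qw_Rw_small hbj
  have main : ∀ (c0 c1 c2 : ℝ) (val : ℝ × ℝ → ℝ),
      (∀ (α β : ℝ) (n : ℕ),
        eS b α β (n+2) * recS b c0 c1 c2 (n+2)
          + ((b (n+1) : ℝ) * eS b α β (n+3) + eS b α β (n+4)) * recS b c0 c1 c2 (n+1)
          + eS b α β (n+3) * recS b c0 c1 c2 n = val (α, β)) →
      val p = val q := by
    intro c0 c1 c2 val hJ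
    set φ : ℕ → ℝ := fun n => recS b c0 c1 c2 n / tS b n with hφ
    have hrec : ∀ n, φ (n+3) = Pw b n * φ (n+2) + Qw b n * φ (n+1) + Rw b n * φ n :=
      fun n => phi_rec c0 c1 c2 n
    have hsmall := Dm_small (φ := φ) (fun n => Pw_nonneg n) (fun n => Qw_nonneg n)
      (fun n => Rw_nonneg n) (fun n => PQRw_sum n) hrec hκ0 hκ1 (fun n => Rw_half n) hinf
    have hgt : ∀ k, recS b c0 c1 c2 k = φ k * tS b k := by
      intro k
      exact (div_mul_cancel₀ _ (tS_pos b k).ne').symm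
    have hbound : ∀ n, |val p - val q| ≤ Dm φ n := by
      intro n
      have hD1 : |φ (n+1) - φ n| ≤ Dm φ n := le_max_left _ _
      have hD2 : |φ (n+2) - φ (n+1)| ≤ Dm φ n := le_trans (le_max_left _ _) (le_max_right _ _)
      have hD3 : |φ (n+2) - φ n| ≤ Dm φ n := le_trans (le_max_right _ _) (le_max_right _ _)
      have expand : ∀ r : ℝ × ℝ,
          (eS b r.1 r.2 (n+2) * tS b (n+2)) * φ (n+2)
            + (((b (n+1) : ℝ) * eS b r.1 r.2 (n+3) + eS b r.1 r.2 (n+4)) * tS b (n+1)) * φ (n+1)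
            + (eS b r.1 r.2 (n+3) * tS b n) * φ n = val r := by
        intro r
        have h := hJ r.1 r.2 n
        rw [hgt (n+2), hgt (n+1), hgt n] at h
        rw [Prod.mk.eta] at h
        linear_combination h
      have hp' := expand p
      have hq' := expand q
      rw [← hp', ← hq']
      refine triple_conv ?_ ?_ ?_ ?_ ?_ ?_ ?_ ?_ hD1 hD2 hD3
      · exact mul_nonneg (hp (n+2)) (tS_pos b _).le
      · exact mul_nonneg
          (add_nonneg (mul_nonneg (Nat.cast_nonneg _) (hp (n+3))) (hp (n+4))) (tS_pos b _).le
      · exact mul_nonneg (hp (n+3)) (tS_pos b _).le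
      · exact mul_nonneg (hq (n+2)) (tS_pos b _).le
      · exact mul_nonneg
          (add_nonneg (mul_nonneg (Nat.cast_nonneg _) (hq (n+3))) (hq (n+4))) (tS_pos b _).le
      · exact mul_nonneg (hq (n+3)) (tS_pos b _).le
      · exact J_t p.1 p.2 n
      · exact J_t q.1 q.2 n
    have hbound2 : ∀ j : ℕ, |val p - val q| ≤ ((1+κ)/2)^j * Dm φ 0 := by
      intro j
      obtain ⟨n, hn⟩ := hsmall j
      exact le_trans (hbound n) hn
    have htend : Filter.Tendsto (fun j : ℕ => ((1+κ)/2)^j * Dm φ 0) Filter.atTop (nhds 0) := by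
      have h := tendsto_pow_atTop_nhds_zero_of_lt_one hγ0 hγ1
      have := h.mul_const (Dm φ 0)
      simpa using this
    have : |val p - val q| ≤ 0 := ge_of_tendsto' htend hbound2
    have : |val p - val q| = 0 := le_antisymm this (abs_nonneg _)
    have := abs_eq_zero.1 this
    linarith
  have h1 : p.1 = q.1 := main 0 1 1 (fun r => r.1) (fun α β n => J_g1 α β n)
  have h2 : p.2 = q.2 := main 0 0 1 (fun r => r.2) (fun α β n => J_g2 α β n)
  exact Prod.ext h1 h2

end uniq

section exist

variable (b : ℕ → ℕ)

/-- backward-constructed positive solution for a finite prefix -/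
noncomputable def revN (n : ℕ) : ℕ → ℝ
  | 0 => 1
  | 1 => 2
  | 2 => 4
  | (i+3) => revN n i + revN n (i+2) + (b (n-1-i) : ℝ) * revN n (i+1)

lemma revN_rec (n i : ℕ) :
    revN b n (i+3) = revN b n i + revN b n (i+2) + (b (n-1-i) : ℝ) * revN b n (i+1) := rfl

lemma revN_pos (n : ℕ) : ∀ i, 0 < revN b n i := by
  intro i
  induction i using Nat.strong_induction_on with
  | _ i ih =>
    match i with
    | 0 => norm_num [revN]
    | 1 => norm_num [revN]
    | 2 => norm_num [revN]
    | (i+3) =>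
      have h0 := ih i (by omega)
      have h1 := ih (i+1) (by omega)
      have h2 := ih (i+2) (by omega)
      have hb : (0:ℝ) ≤ (b (n-1-i) : ℝ) := Nat.cast_nonneg _
      rw [revN_rec]
      nlinarith

lemma revN_mono (n : ℕ) : ∀ i, revN b n i < revN b n (i+1) := by
  intro i
  match i with
  | 0 => norm_num [revN]
  | 1 => norm_num [revN]
  | (i+2) =>
    have h0 := revN_pos b n i
    have h1 := revN_pos b n (i+1)
    have hb : (0:ℝ) ≤ (b (n-1-i) : ℝ) := Nat.cast_nonneg _
    rw [show (i+2)+1 = i+3 from rfl, revN_rec]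
    nlinarith

lemma revN_mono' (n : ℕ) {i j : ℕ} (h : i ≤ j) : revN b n i ≤ revN b n j := by
  induction j with
  | zero => simp_all
  | succ j ih =>
    rcases Nat.lt_or_ge i (j+1) with h' | h'
    · exact le_trans (ih (by omega)) (revN_mono b n j).le
    · have : i = j + 1 := by omega
      simp [this]

lemma revN_key (n : ℕ) :
    ∀ k, k ≤ n + 2 →
      eS b (revN b n (n+1) / revN b n (n+2)) (revN b n n / revN b n (n+2)) k
        = revN b n (n+2-k) / revN b n (n+2) := by
  intro k
  induction k using Nat.strong_induction_on with
  | _ k ih =>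
    match k with
    | 0 =>
      intro _
      simp only [eS, Nat.sub_zero]
      exact (div_self (revN_pos b n (n+2)).ne').symm
    | 1 => intro _; rfl
    | 2 =>
      intro _
      have : n + 2 - 2 = n := by omega
      rw [this]; rfl
    | (j+3) =>
      intro hk
      have h0 := ih j (by omega) (by omega)
      have h1 := ih (j+1) (by omega) (by omega)
      have h2 := ih (j+2) (by omega) (by omega)
      have hR := (revN_pos b n (n+2)).ne'
      rw [eS_rec, h0, h1, h2]
      have hrev : revN b n (n+2-j)
          = revN b n (n+2-(j+3)) + revN b n (n+2-(j+1)) + (b j : ℝ) * revN b n (n+2-(j+2)) := by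
        have e3 : n+2-j = (n-1-j)+3 := by omega
        have e2 : n+2-(j+1) = (n-1-j)+2 := by omega
        have e1 : n+2-(j+2) = (n-1-j)+1 := by omega
        have e0 : n+2-(j+3) = n-1-j := by omega
        have ebi : n-1-(n-1-j) = j := by omega
        rw [e3, e2, e1, e0, revN_rec, ebi]
      rw [hrev]
      field_simp
      ring

/-- the nested closed sets -/
def Cse (n : ℕ) : Set (ℝ × ℝ) :=
  {p : ℝ × ℝ | p.2 ≤ p.1} ∩ {p : ℝ × ℝ | p.1 ≤ 1} ∩ {p : ℝ × ℝ | 0 ≤ p.2} ∩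
    ⋂ k ∈ Set.Iic n, {p : ℝ × ℝ | 0 ≤ eS b p.1 p.2 k}

lemma mem_Cse {n : ℕ} {p : ℝ × ℝ} :
    p ∈ Cse b n ↔ p.2 ≤ p.1 ∧ p.1 ≤ 1 ∧ 0 ≤ p.2 ∧ ∀ k ≤ n, 0 ≤ eS b p.1 p.2 k := by
  simp [Cse, Set.mem_iInter, and_assoc]

lemma eS_cont : ∀ k, Continuous fun p : ℝ × ℝ => eS b p.1 p.2 k := by
  intro k
  induction k using Nat.strong_induction_on with
  | _ k ih =>
    match k with
    | 0 => exact continuous_const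
    | 1 => exact continuous_fst
    | 2 => exact continuous_snd
    | (k+3) =>
      have h0 := ih k (by omega)
      have h1 := ih (k+1) (by omega)
      have h2 := ih (k+2) (by omega)
      show Continuous fun p : ℝ × ℝ =>
        eS b p.1 p.2 k - eS b p.1 p.2 (k+1) - (b k : ℝ) * eS b p.1 p.2 (k+2)
      exact (h0.sub h1).sub (continuous_const.mul h2)

lemma Cse_closed (n : ℕ) : IsClosed (Cse b n) := by
  refine IsClosed.inter (IsClosed.inter (IsClosed.inter ?_ ?_) ?_) ?_
  · exact isClosed_le continuous_snd continuous_fst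
  · exact isClosed_le continuous_fst continuous_const
  · exact isClosed_le continuous_const continuous_snd
  · exact isClosed_biInter fun k _ => isClosed_le continuous_const (eS_cont b k)

lemma Cse_nonempty (n : ℕ) : (Cse b n).Nonempty := by
  refine ⟨(revN b n (n+1) / revN b n (n+2), revN b n n / revN b n (n+2)), ?_⟩
  rw [mem_Cse]
  have hR := revN_pos b n (n+2)
  refine ⟨?_, ?_, ?_, ?_⟩
  · exact (div_le_div_iff_of_pos_right hR).2 (revN_mono' b n (by omega))
  · exact (div_le_one hR).2 (revN_mono b n (n+1)).le
  · exact div_nonneg (revN_pos b n n).le hR.le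
  · intro k hk
    rw [revN_key b n k (by omega)]
    exact div_nonneg (revN_pos b n _).le hR.le

lemma Cse_exists : ∃ p : ℝ × ℝ, ∀ k, 0 ≤ eS b p.1 p.2 k := by
  have hnest : ∀ n, Cse b (n+1) ⊆ Cse b n := by
    intro n p hp
    rw [mem_Cse] at hp ⊢
    exact ⟨hp.1, hp.2.1, hp.2.2.1, fun k hk => hp.2.2.2 k (by omega)⟩
  have hsub : Cse b 0 ⊆ Set.Icc ((0:ℝ), (0:ℝ)) ((1:ℝ), (1:ℝ)) := by
    intro p hp
    rw [mem_Cse] at hp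
    obtain ⟨h1, h2, h3, _⟩ := hp
    constructor
    · exact ⟨show (0:ℝ) ≤ p.1 by linarith, h3⟩
    · exact ⟨h2, show p.2 ≤ (1:ℝ) by linarith⟩
  have hcpt : IsCompact (Cse b 0) :=
    IsCompact.of_isClosed_subset isCompact_Icc (Cse_closed b 0) hsub
  obtain ⟨p, hp⟩ := IsCompact.nonempty_iInter_of_sequence_nonempty_isCompact_isClosed
    (Cse b) hnest (Cse_nonempty b) hcpt (Cse_closed b)
  refine ⟨p, fun k => ?_⟩
  have := Set.mem_iInter.1 hp k
  rw [mem_Cse] at this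
  exact this.2.2.2 k (le_refl k)

end exist

/-- If some integer occurs infinitely often in the sequence (k₁, k₂, …) of nonnegative
integers (here b n = k_{n+1}), then there is exactly one pair (α,β) ∈ △ whose triangle
sequence is nonterminating and equals (k₁, k₂, …). -/
theorem stmt_9 (b : ℕ → ℕ) (hb : ∃ m : ℕ, {n | b n = m}.Infinite) :
    ∃! p : ℝ × ℝ, p ∈ Tri ∧ (∀ k, 0 < triD p.1 p.2 k) ∧ ∀ n, triA p.1 p.2 n = b n := by
  obtain ⟨m, hm⟩ := hb
  obtain ⟨p, hp⟩ := Cse_exists b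
  have hc := conds_of_eS hp
  refine ⟨p, ⟨hc.1, hc.2.1, hc.2.2⟩, ?_⟩
  intro q hq
  have hqe : ∀ k, 0 ≤ eS b q.1 q.2 k := by
    intro k
    have h := triD_eq_eS_of hq.2.1 hq.2.2 k
    rw [← h]
    exact (hq.2.1 k).le
  exact uniq hm hqe hp
end

section
/- Suppose (α,β) ∈ △ has a nonterminating triangle sequence (a_1, a_2, …) and is the unique pair in △ with that triangle sequence. Then α = lim_{k→∞} (p_k·r_{k-1} - p_{k-1}·r_k)/(q_{k-1}·r_k - q_k·r_{k-1}) and β = lim_{k→∞} (p_{k-1}·q_k - p_k·q_{k-1})/(q_{k-1}·r_k - q_k·r_{k-1}). -/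
/-- The matrix P_{k+1} (rows (0,0,1), (1,0,-1), (0,1,-a_{k+1})). -/
noncomputable def triP (α β : ℝ) (k : ℕ) : Matrix (Fin 3) (Fin 3) ℝ :=
  !![0, 0, 1; 1, 0, -1; 0, 1, -(triA α β k : ℝ)]

/-- The matrix M_k = P₁·P₂⋯P_k.  Its columns 0,1,2 are
    (p_{k-2},q_{k-2},r_{k-2}), (p_{k-1},q_{k-1},r_{k-1}), (p_k,q_k,r_k). -/
noncomputable def triM (α β : ℝ) : ℕ → Matrix (Fin 3) (Fin 3) ℝ
  | 0 => 1
  | (k+1) => triM α β k * triP α β k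

namespace TriAux

noncomputable def Q (a : ℕ) : Matrix (Fin 3) (Fin 3) ℝ := !![1,1,0;(a:ℝ),0,1;1,0,0]

noncomputable def N (α β : ℝ) (k : ℕ) : Matrix (Fin 3) (Fin 3) ℝ := (triM α β k).adjugate

lemma adjP (α β : ℝ) (k : ℕ) : (triP α β k).adjugate = Q (triA α β k) := by
  rw [triP, Matrix.adjugate_fin_three_of, Q]
  norm_num

lemma N_zero (α β : ℝ) : N α β 0 = 1 := by
  rw [N, triM, Matrix.adjugate_one]

lemma N_succ (α β : ℝ) (k : ℕ) : N α β (k+1) = Q (triA α β k) * N α β k := by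
  rw [N, N, triM, Matrix.adjugate_mul_distrib, adjP]

lemma detP (α β : ℝ) (k : ℕ) : (triP α β k).det = 1 := by
  rw [Matrix.det_fin_three]; simp [triP]

lemma detM (α β : ℝ) (k : ℕ) : (triM α β k).det = 1 := by
  induction k with
  | zero => rw [triM, Matrix.det_one]
  | succ k ih => rw [triM, Matrix.det_mul, ih, detP, one_mul]

lemma NM (α β : ℝ) (k : ℕ) : N α β k * triM α β k = 1 := by
  rw [N, Matrix.adjugate_mul, detM, one_smul]

end TriAux


namespace TriAux

def Good (X : Matrix (Fin 3) (Fin 3) ℝ) : Prop :=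
  (∀ i j, 0 ≤ X i j) ∧ (∀ i, X i 1 ≤ X i 0) ∧ (∀ i, X i 2 ≤ X i 1)

lemma Q_mul_apply0 (a : ℕ) (X : Matrix (Fin 3) (Fin 3) ℝ) (j : Fin 3) :
    (Q a * X) 0 j = X 0 j + X 1 j := by
  simp [Q, Matrix.mul_apply, Fin.sum_univ_three, Matrix.vecHead, Matrix.vecTail]

lemma Q_mul_apply1 (a : ℕ) (X : Matrix (Fin 3) (Fin 3) ℝ) (j : Fin 3) :
    (Q a * X) 1 j = (a : ℝ) * X 0 j + X 2 j := by
  simp [Q, Matrix.mul_apply, Fin.sum_univ_three, Matrix.vecHead, Matrix.vecTail]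

lemma Q_mul_apply2 (a : ℕ) (X : Matrix (Fin 3) (Fin 3) ℝ) (j : Fin 3) :
    (Q a * X) 2 j = X 0 j := by
  simp [Q, Matrix.mul_apply, Fin.sum_univ_three, Matrix.vecHead, Matrix.vecTail]

lemma good_mul (a : ℕ) (X : Matrix (Fin 3) (Fin 3) ℝ) (h : Good X) : Good (Q a * X) := by
  obtain ⟨h1, h2, h3⟩ := h
  have ha : (0:ℝ) ≤ a := Nat.cast_nonneg a
  refine ⟨fun i j => ?_, fun i => ?_, fun i => ?_⟩ <;>
    refine Fin.cases ?_ (fun i' => Fin.cases ?_ (fun i'' => Fin.cases ?_ (fun i3 => i3.elim0) i'') i') i <;>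
    simp only [Q_mul_apply0, Q_mul_apply1, Q_mul_apply2, Fin.succ_zero_eq_one, Fin.succ_one_eq_two]
  · exact add_nonneg (h1 0 j) (h1 1 j)
  · exact add_nonneg (mul_nonneg ha (h1 0 j)) (h1 2 j)
  · exact h1 0 j
  · exact add_le_add (h2 0) (h2 1)
  · nlinarith [mul_le_mul_of_nonneg_left (h2 0) ha, h2 2]
  · exact h2 0
  · exact add_le_add (h3 0) (h3 1)
  · nlinarith [mul_le_mul_of_nonneg_left (h3 0) ha, h3 2]
  · exact h3 0

lemma QQ_eq (a b : ℕ) : Q b * Q a = !![(a:ℝ)+1,1,1;(b:ℝ)+1,(b:ℝ),0;1,1,0] := by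
  ext i j
  fin_cases i <;> fin_cases j <;>
    simp [Q, Matrix.mul_apply, Fin.sum_univ_three, Matrix.vecHead, Matrix.vecTail] <;> ring

lemma good_QQ (a b : ℕ) : Good (Q b * Q a) := by
  have ha : (0:ℝ) ≤ a := Nat.cast_nonneg a
  have hb : (0:ℝ) ≤ b := Nat.cast_nonneg b
  rw [QQ_eq]
  refine ⟨fun i j => ?_, fun i => ?_, fun i => ?_⟩ <;> fin_cases i <;>
    [fin_cases j; fin_cases j; fin_cases j; skip; skip; skip; skip; skip; skip] <;>
    simp [Matrix.vecHead, Matrix.vecTail] <;> linarith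

lemma N_nonneg (α β : ℝ) (k : ℕ) : ∀ i j, 0 ≤ N α β k i j := by
  induction k with
  | zero => intro i j; rw [N_zero]; fin_cases i <;> fin_cases j <;> simp
  | succ k ih =>
    intro i j
    rw [N_succ]
    refine Fin.cases ?_ (fun i' => Fin.cases ?_ (fun i'' => Fin.cases ?_ (fun i3 => i3.elim0) i'') i') i <;>
      simp only [Q_mul_apply0, Q_mul_apply1, Q_mul_apply2, Fin.succ_zero_eq_one, Fin.succ_one_eq_two]
    · exact add_nonneg (ih 0 j) (ih 1 j)
    · exact add_nonneg (mul_nonneg (Nat.cast_nonneg _) (ih 0 j)) (ih 2 j)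
    · exact ih 0 j

lemma N00_ge_one (α β : ℝ) (k : ℕ) : 1 ≤ N α β k 0 0 := by
  induction k with
  | zero => rw [N_zero]; norm_num
  | succ k ih =>
    rw [N_succ, Q_mul_apply0]
    have := N_nonneg α β k 1 0
    linarith

lemma N00_pos (α β : ℝ) (k : ℕ) : 0 < N α β k 0 0 :=
  lt_of_lt_of_le one_pos (N00_ge_one α β k)

lemma good_S (α β : ℝ) (k m : ℕ) (h : k + 2 ≤ m) : Good (N α β m * triM α β k) := by
  induction m, h using Nat.le_induction with
  | base =>
    rw [N_succ, N_succ, Matrix.mul_assoc, Matrix.mul_assoc, NM, Matrix.mul_one]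
    exact good_QQ _ _
  | succ m hm ih =>
    rw [N_succ, Matrix.mul_assoc]
    exact good_mul _ _ ih

end TriAux


namespace TriAux

lemma rem_lt {x y : ℝ} (hx : 0 ≤ x) (hy : 0 < y) :
    x - ((⌊x/y⌋).toNat : ℝ) * y < y := by
  have hfl : (0:ℤ) ≤ ⌊x/y⌋ := Int.floor_nonneg.2 (div_nonneg hx hy.le)
  have hc : ((⌊x/y⌋).toNat : ℝ) = ((⌊x/y⌋ : ℤ) : ℝ) := by
    exact_mod_cast congrArg (fun z : ℤ => (z : ℝ)) (Int.toNat_of_nonneg hfl)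
  rw [hc]
  have h2 : x/y < ⌊x/y⌋ + 1 := Int.lt_floor_add_one _
  have h3 : x < (⌊x/y⌋ + 1) * y := by
    have := (div_lt_iff₀ hy).1 h2
    linarith [this]
  push_cast at h3 ⊢
  nlinarith

lemma floor_digit {x y : ℝ} {a : ℕ} (hy : 0 < y) (h0 : 0 ≤ x - (a:ℝ)*y)
    (h1 : x - (a:ℝ)*y < y) : (⌊x / y⌋).toNat = a := by
  have : ⌊x / y⌋ = (a : ℤ) := by
    rw [Int.floor_eq_iff]
    constructor
    · rw [le_div_iff₀ hy]; push_cast; linarith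
    · rw [div_lt_iff₀ hy]; push_cast; linarith
  rw [this, Int.toNat_natCast]

lemma d_rec (α β : ℝ) (hnt : ∀ k, 0 < triD α β k) (n : ℕ) :
    triD α β (n+3) = triD α β n - triD α β (n+1) - (triA α β n : ℝ) * triD α β (n+2) := by
  rw [triD, if_pos (hnt (n+2)), triA]

lemma d_anti (α β : ℝ) (hmem : (α, β) ∈ Tri) (hnt : ∀ k, 0 < triD α β k) :
    ∀ n, triD α β (n+1) ≤ triD α β n := by
  intro n
  induction n using Nat.strong_induction_on with
  | _ n ih =>
    cases n with
    | zero => show triD α β 1 ≤ triD α β 0; rw [triD, triD]; exact hmem.1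
    | succ n' =>
      cases n' with
      | zero => show triD α β 2 ≤ triD α β 1; rw [triD, triD]; exact hmem.2.1
      | succ m =>
        have hx : 0 ≤ triD α β m - triD α β (m+1) := by
          have := ih m (by omega); linarith
        have h := rem_lt hx (hnt (m+2))
        rw [triD, if_pos (hnt (m+2))]
        linarith
    
lemma d_strict (α β : ℝ) (hmem : (α, β) ∈ Tri) (hnt : ∀ k, 0 < triD α β k) (n : ℕ) :
    triD α β (n+3) < triD α β (n+2) := by
  have hx : 0 ≤ triD α β n - triD α β (n+1) := by
    have := d_anti α β hmem hnt n; linarith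
  have h := rem_lt hx (hnt (n+2))
  rw [triD, if_pos (hnt (n+2))]
  linarith

end TriAux


namespace TriAux

open Filter Topology

lemma key (α β : ℝ) (hmem : (α, β) ∈ Tri) (hnt : ∀ k, 0 < triD α β k)
    (huniq : ∀ α' β' : ℝ, (α', β') ∈ Tri → (∀ k, 0 < triD α' β' k) →
      (∀ n, triA α' β' n = triA α β n) → α' = α ∧ β' = β)
    (m : ℕ → ℕ) (hm : Tendsto m atTop atTop) (L : ℝ × ℝ)
    (hL : Tendsto (fun i => (N α β (m i) 0 1 / N α β (m i) 0 0,
        N α β (m i) 0 2 / N α β (m i) 0 0)) atTop (𝓝 L)) :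
    L = (α, β) := by
  have hx : Tendsto (fun i => N α β (m i) 0 1 / N α β (m i) 0 0) atTop (𝓝 L.1) :=
    (continuous_fst.tendsto L).comp hL
  have hy : Tendsto (fun i => N α β (m i) 0 2 / N α β (m i) 0 0) atTop (𝓝 L.2) :=
    (continuous_snd.tendsto L).comp hL
  obtain ⟨E, hEdef⟩ : ∃ E : ℕ → Fin 3 → ℝ, ∀ k j,
      E k j = triM α β k 0 j + L.1 * triM α β k 1 j + L.2 * triM α β k 2 j :=
    ⟨_, fun _ _ => rfl⟩
  -- limits of the normalized rows
  have hEt : ∀ k j, Tendsto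
      (fun i => (N α β (m i) * triM α β k) 0 j / N α β (m i) 0 0) atTop (𝓝 (E k j)) := by
    intro k j
    rw [hEdef]
    have h1 : Tendsto (fun i => triM α β k 0 j
        + (N α β (m i) 0 1 / N α β (m i) 0 0) * triM α β k 1 j
        + (N α β (m i) 0 2 / N α β (m i) 0 0) * triM α β k 2 j) atTop
        (𝓝 (triM α β k 0 j + L.1 * triM α β k 1 j + L.2 * triM α β k 2 j)) :=
      (tendsto_const_nhds.add (hx.mul tendsto_const_nhds)).add (hy.mul tendsto_const_nhds)
    refine h1.congr (fun i => ?_)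
    have hN := (N00_pos α β (m i)).ne'
    rw [Matrix.mul_apply, Fin.sum_univ_three]
    field_simp
  have hev : ∀ k : ℕ, ∀ᶠ i in atTop, k + 2 ≤ m i := fun k => hm.eventually_ge_atTop (k+2)
  have hineq : ∀ k, 0 ≤ E k 2 ∧ E k 2 ≤ E k 1 ∧ E k 1 ≤ E k 0 := by
    intro k
    refine ⟨?_, ?_, ?_⟩
    · refine le_of_tendsto_of_tendsto tendsto_const_nhds (hEt k 2) ?_
      filter_upwards [hev k] with i hi
      exact div_nonneg ((good_S α β k (m i) hi).1 0 2) (N00_pos α β (m i)).le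
    · refine le_of_tendsto_of_tendsto (hEt k 2) (hEt k 1) ?_
      filter_upwards [hev k] with i hi
      exact div_le_div_of_nonneg_right ((good_S α β k (m i) hi).2.2 0) (N00_pos α β (m i)).le
    · refine le_of_tendsto_of_tendsto (hEt k 1) (hEt k 0) ?_
      filter_upwards [hev k] with i hi
      exact div_le_div_of_nonneg_right ((good_S α β k (m i) hi).2.1 0) (N00_pos α β (m i)).le
  -- recurrences for E
  have hM1 : ∀ k : ℕ, triM α β (k+1) = triM α β k * triP α β k := fun k => rfl
  have hErec0 : ∀ k, E (k+1) 0 = E k 1 := by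
    intro k
    simp only [hEdef, hM1, Matrix.mul_apply, Fin.sum_univ_three, triP]
    simp
  have hErec1 : ∀ k, E (k+1) 1 = E k 2 := by
    intro k
    simp only [hEdef, hM1, Matrix.mul_apply, Fin.sum_univ_three, triP]
    simp
  have hErec2 : ∀ k, E (k+1) 2 = E k 0 - E k 1 - (triA α β k : ℝ) * E k 2 := by
    intro k
    simp only [hEdef, hM1, Matrix.mul_apply, Fin.sum_univ_three, triP]
    simp
    ring
  -- initial values
  have hM0 : triM α β 0 = 1 := rfl
  have hE00 : E 0 0 = 1 := by simp [hEdef, hM0, Matrix.one_apply]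
  have hE01 : E 0 1 = L.1 := by simp [hEdef, hM0, Matrix.one_apply]
  have hE02 : E 0 2 = L.2 := by simp [hEdef, hM0, Matrix.one_apply]
  have hF1 : E 1 0 = L.1 := by rw [hErec0, hE01]
  have hF2 : E 2 0 = L.2 := by rw [hErec0, hErec1, hE02]
  -- the midpoint candidate
  obtain ⟨P1, P2, hP1, hP2⟩ : ∃ P1 P2 : ℝ, P1 = (α + L.1)/2 ∧ P2 = (β + L.2)/2 :=
    ⟨_, _, rfl, rfl⟩
  obtain ⟨G, hGdef⟩ : ∃ G : ℕ → ℝ, ∀ n, G n = (triD α β n + E n 0)/2 := ⟨_, fun _ => rfl⟩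
  have hEnonneg : ∀ n, 0 ≤ E n 0 :=
    fun n => le_trans (hineq n).1 (le_trans (hineq n).2.1 (hineq n).2.2)
  have hGpos : ∀ n, 0 < G n := by
    intro n
    have h1 := hnt n
    have h2 := hEnonneg n
    rw [hGdef]
    linarith
  have hGrec : ∀ n, G (n+3) = G n - G (n+1) - (triA α β n : ℝ) * G (n+2) := by
    intro n
    have e3 : E (n+3) 0 = E n 0 - E n 1 - (triA α β n : ℝ) * E n 2 := by
      rw [hErec0, hErec1, hErec2]
    have e1 : E (n+1) 0 = E n 1 := hErec0 n
    have e2 : E (n+2) 0 = E n 2 := by rw [hErec0, hErec1]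
    have hd := d_rec α β hnt n
    rw [hGdef, hGdef, hGdef, hGdef, e3, e1, e2, hd]
    ring
  have hGstrict : ∀ n, G (n+3) < G (n+2) := by
    intro n
    have hE3 : E (n+3) 0 ≤ E (n+2) 0 := by
      rw [hErec0]; exact (hineq (n+2)).2.2
    have hd := d_strict α β hmem hnt n
    rw [hGdef, hGdef]
    linarith
  have hDG : ∀ n, triD P1 P2 n = G n := by
    intro n
    induction n using Nat.strong_induction_on with
    | _ n ih =>
      match n with
      | 0 => rw [triD, hGdef, hE00, triD]; norm_num
      | 1 => rw [triD, hGdef, hF1, triD, hP1]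
      | 2 => rw [triD, hGdef, hF2, triD, hP2]
      | (n+3) =>
        have i0 := ih n (by omega)
        have i1 := ih (n+1) (by omega)
        have i2 := ih (n+2) (by omega)
        rw [triD, i0, i1, i2, if_pos (hGpos (n+2))]
        have hfd : (⌊(G n - G (n+1)) / G (n+2)⌋).toNat = triA α β n := by
          refine floor_digit (hGpos (n+2)) ?_ ?_
          · have h1 := hGpos (n+3)
            have h2 := hGrec n
            linarith
          · have h1 := hGstrict n
            have h2 := hGrec n
            linarith
        rw [hfd, hGrec n]
  have hApt : ∀ n, triA P1 P2 n = triA α β n := by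
    intro n
    rw [triA, hDG, hDG, hDG]
    refine floor_digit (hGpos (n+2)) ?_ ?_
    · have h1 := hGpos (n+3)
      have h2 := hGrec n
      linarith
    · have h1 := hGstrict n
      have h2 := hGrec n
      linarith
  have hTriP : ((P1, P2) : ℝ × ℝ) ∈ Tri := by
    have h1 : L.1 ≤ 1 := by rw [← hE01, ← hE00]; exact (hineq 0).2.2
    have h2 : L.2 ≤ L.1 := by rw [← hE01, ← hE02]; exact (hineq 0).2.1
    have h3 : 0 ≤ L.2 := by rw [← hE02]; exact (hineq 0).1
    have hα : α ≤ 1 := hmem.1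
    have hβ : β ≤ α := hmem.2.1
    have hβ0 : 0 < β := hmem.2.2
    refine ⟨by rw [hP1]; show (α + L.1)/2 ≤ 1; linarith,
      by rw [hP1, hP2]; show (β + L.2)/2 ≤ (α + L.1)/2; linarith,
      by rw [hP2]; show (0:ℝ) < (β + L.2)/2; linarith⟩
  have hposP : ∀ k, 0 < triD P1 P2 k := by
    intro k; rw [hDG]; exact hGpos k
  obtain ⟨hv1, hv2⟩ := huniq P1 P2 hTriP hposP hApt
  have hL1 : L.1 = α := by rw [hP1] at hv1; linarith
  have hL2 : L.2 = β := by rw [hP2] at hv2; linarith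
  exact Prod.ext hL1 hL2

end TriAux


open Filter Topology TriAux in
theorem TriAux.stmt_10_aux (α β : ℝ) (hmem : (α, β) ∈ Tri) (hnt : ∀ k, 0 < triD α β k)
    (huniq : ∀ α' β' : ℝ, (α', β') ∈ Tri → (∀ k, 0 < triD α' β' k) →
      (∀ n, triA α' β' n = triA α β n) → α' = α ∧ β' = β) :
    Filter.Tendsto (fun k =>
        (triM α β k 0 2 * triM α β k 2 1 - triM α β k 0 1 * triM α β k 2 2) /
        (triM α β k 1 1 * triM α β k 2 2 - triM α β k 1 2 * triM α β k 2 1))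
      Filter.atTop (nhds α) ∧
    Filter.Tendsto (fun k =>
        (triM α β k 0 1 * triM α β k 1 2 - triM α β k 0 2 * triM α β k 1 1) /
        (triM α β k 1 1 * triM α β k 2 2 - triM α β k 1 2 * triM α β k 2 1))
      Filter.atTop (nhds β) := by
  have main : Tendsto (fun k => (N α β k 0 1 / N α β k 0 0, N α β k 0 2 / N α β k 0 0))
      atTop (𝓝 (α, β)) := by
    apply Filter.tendsto_of_subseq_tendsto
    intro ns hns
    have hK : IsCompact ((Set.Icc (0:ℝ) 1) ×ˢ (Set.Icc (0:ℝ) 1)) :=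
      isCompact_Icc.prod isCompact_Icc
    have hmem2 : ∀ n : ℕ, 2 ≤ n →
        ((N α β n 0 1 / N α β n 0 0, N α β n 0 2 / N α β n 0 0) : ℝ × ℝ) ∈
          (Set.Icc (0:ℝ) 1) ×ˢ (Set.Icc (0:ℝ) 1) := by
      intro n hn
      have hg : Good (N α β n) := by
        have := good_S α β 0 n (by omega)
        rwa [show triM α β 0 = 1 from rfl, Matrix.mul_one] at this
      have hpos := N00_pos α β n
      constructor
      · constructor
        · exact div_nonneg (hg.1 0 1) hpos.le
        · rw [div_le_one hpos]; exact hg.2.1 0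
      · constructor
        · exact div_nonneg (hg.1 0 2) hpos.le
        · rw [div_le_one hpos]
          exact le_trans (hg.2.2 0) (hg.2.1 0)
    have hfreq : ∃ᶠ i in atTop,
        ((N α β (ns i) 0 1 / N α β (ns i) 0 0, N α β (ns i) 0 2 / N α β (ns i) 0 0) : ℝ × ℝ) ∈
          (Set.Icc (0:ℝ) 1) ×ˢ (Set.Icc (0:ℝ) 1) := by
      refine Filter.Eventually.frequently ?_
      filter_upwards [hns.eventually_ge_atTop 2] with i hi
      exact hmem2 (ns i) hi
    obtain ⟨L, _, φ, hφ, hLt⟩ := hK.tendsto_subseq' hfreq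
    have hmm : Tendsto (fun i => ns (φ i)) atTop atTop := hns.comp hφ.tendsto_atTop
    have hLt' : Tendsto (fun i =>
        ((N α β (ns (φ i)) 0 1 / N α β (ns (φ i)) 0 0,
          N α β (ns (φ i)) 0 2 / N α β (ns (φ i)) 0 0) : ℝ × ℝ)) atTop (𝓝 L) := hLt
    have hLeq : L = (α, β) := key α β hmem hnt huniq (fun i => ns (φ i)) hmm L hLt'
    exact ⟨φ, hLeq ▸ hLt'⟩
  have hfst : Tendsto (fun k => N α β k 0 1 / N α β k 0 0) atTop (𝓝 α) :=
    (continuous_fst.tendsto ((α, β) : ℝ × ℝ)).comp main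
  have hsnd : Tendsto (fun k => N α β k 0 2 / N α β k 0 0) atTop (𝓝 β) :=
    (continuous_snd.tendsto ((α, β) : ℝ × ℝ)).comp main
  constructor
  · refine hfst.congr (fun k => ?_)
    have hadj := Matrix.adjugate_fin_three (triM α β k)
    have h00 : N α β k 0 0 = triM α β k 1 1 * triM α β k 2 2 - triM α β k 1 2 * triM α β k 2 1 := by
      rw [N, hadj]; simp
    have h01 : N α β k 0 1 = -(triM α β k 0 1 * triM α β k 2 2) + triM α β k 0 2 * triM α β k 2 1 := by
      rw [N, hadj]; simp
    rw [h00, h01]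
    congr 1
    ring
  · refine hsnd.congr (fun k => ?_)
    have hadj := Matrix.adjugate_fin_three (triM α β k)
    have h00 : N α β k 0 0 = triM α β k 1 1 * triM α β k 2 2 - triM α β k 1 2 * triM α β k 2 1 := by
      rw [N, hadj]; simp
    have h02 : N α β k 0 2 = triM α β k 0 1 * triM α β k 1 2 - triM α β k 0 2 * triM α β k 1 1 := by
      rw [N, hadj]; simp
    rw [h00, h02]


/-- If (α,β) ∈ △ has a nonterminating triangle sequence and is the unique pair in △
with that triangle sequence, then
α = lim (p_k·r_{k-1} - p_{k-1}·r_k)/(q_{k-1}·r_k - q_k·r_{k-1}) and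
β = lim (p_{k-1}·q_k - p_k·q_{k-1})/(q_{k-1}·r_k - q_k·r_{k-1}),
where p_{k-1} = (M_k)₀₁, p_k = (M_k)₀₂, q_{k-1} = (M_k)₁₁, q_k = (M_k)₁₂,
r_{k-1} = (M_k)₂₁, r_k = (M_k)₂₂. -/
theorem stmt_10 (α β : ℝ) (hmem : (α, β) ∈ Tri) (hnt : ∀ k, 0 < triD α β k)
    (huniq : ∀ α' β' : ℝ, (α', β') ∈ Tri → (∀ k, 0 < triD α' β' k) →
      (∀ n, triA α' β' n = triA α β n) → α' = α ∧ β' = β) :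
    Filter.Tendsto (fun k =>
        (triM α β k 0 2 * triM α β k 2 1 - triM α β k 0 1 * triM α β k 2 2) /
        (triM α β k 1 1 * triM α β k 2 2 - triM α β k 1 2 * triM α β k 2 1))
      Filter.atTop (nhds α) ∧
    Filter.Tendsto (fun k =>
        (triM α β k 0 1 * triM α β k 1 2 - triM α β k 0 2 * triM α β k 1 1) /
        (triM α β k 1 1 * triM α β k 2 2 - triM α β k 1 2 * triM α β k 2 1))
      Filter.atTop (nhds β) := by
  exact TriAux.stmt_10_aux α β hmem hnt huniq
end

section
/- If (α,β) ∈ △ has a nonterminating triangle sequence, then the associated numbers d_k satisfy 0 < d_k < d_{k-1} for all k ≥ 1, and d_k → 0 as k → ∞. -/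
/-- If (α,β) ∈ △ has a nonterminating triangle sequence, then 0 < d_k < d_{k-1} for all
k ≥ 1 (d_k = triD α β (k+2)), and d_k → 0 as k → ∞. -/
theorem stmt_11 (α β : ℝ) (hmem : (α, β) ∈ Tri) (hnt : ∀ k, 0 < triD α β k) :
    (∀ k : ℕ, 0 < triD α β (k + 3) ∧ triD α β (k + 3) < triD α β (k + 2)) ∧
    Filter.Tendsto (triD α β) Filter.atTop (nhds 0) := by
  obtain ⟨h1, h2, h3⟩ := hmem
  have heq : ∀ k : ℕ, triD α β (k + 3) = triD α β k - triD α β (k+1) -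
      ((⌊(triD α β k - triD α β (k+1)) / triD α β (k+2)⌋).toNat : ℝ) * triD α β (k+2) := by
    intro k
    rw [triD]
    simp [hnt (k+2)]
  have key : ∀ k : ℕ, triD α β (k + 3) < triD α β (k + 2) := by
    intro k
    have hc : 0 < triD α β (k+2) := hnt _
    rw [heq k]
    set s := triD α β k - triD α β (k+1) with hs
    set c := triD α β (k+2) with hcdef
    rcases le_or_gt 0 (⌊s/c⌋) with hfl | hfl
    · have hcast : ((⌊s/c⌋.toNat : ℝ)) = (⌊s/c⌋ : ℝ) := by
        exact_mod_cast congrArg (fun z : ℤ => (z : ℝ)) (Int.toNat_of_nonneg hfl)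
      rw [hcast]
      have hlt : s / c < ⌊s/c⌋ + 1 := Int.lt_floor_add_one _
      have := (div_lt_iff₀ hc).mp hlt
      nlinarith
    · have : ⌊s/c⌋.toNat = 0 := Int.toNat_of_nonpos hfl.le
      rw [this]
      have hsneg : s / c < 0 := by
        have : s/c < ⌊s/c⌋ + 1 := Int.lt_floor_add_one _
        have : (⌊s/c⌋ : ℝ) + 1 ≤ 0 := by exact_mod_cast hfl
        linarith [Int.lt_floor_add_one (s/c)]
      have : s < 0 := by
        have := (div_neg_iff).mp hsneg
        rcases this with ⟨_, h⟩ | ⟨h, _⟩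
        · linarith
        · exact h
      simpa using by linarith
  have hant : Antitone (triD α β) := by
    apply antitone_nat_of_succ_le
    intro n
    match n with
    | 0 => show triD α β 1 ≤ triD α β 0; simpa [triD] using h1
    | 1 => show triD α β 2 ≤ triD α β 1; simpa [triD] using h2
    | (k+2) => exact (key k).le
  have hbdd : BddBelow (Set.range (triD α β)) :=
    ⟨0, by rintro x ⟨k, rfl⟩; exact (hnt k).le⟩
  have hlim := tendsto_atTop_ciInf hant hbdd
  set L := ⨅ n, triD α β n with hLdef
  have hL0 : 0 ≤ L := le_ciInf fun k => (hnt k).le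
  have hle : ∀ k, triD α β (k+3) ≤ triD α β k - triD α β (k+1) := by
    intro k
    rw [heq k]
    have hc : 0 < triD α β (k+2) := hnt _
    have : (0:ℝ) ≤ ((⌊(triD α β k - triD α β (k+1)) / triD α β (k+2)⌋).toNat : ℝ) :=
      Nat.cast_nonneg _
    nlinarith
  have h3lim : Filter.Tendsto (fun k => triD α β (k+3)) Filter.atTop (nhds L) :=
    hlim.comp (Filter.tendsto_add_atTop_nat 3)
  have hsub : Filter.Tendsto (fun k => triD α β k - triD α β (k+1)) Filter.atTop
      (nhds (L - L)) :=
    hlim.sub (hlim.comp (Filter.tendsto_add_atTop_nat 1))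
  have hLle : L ≤ L - L := le_of_tendsto_of_tendsto' h3lim hsub hle
  have hLzero : L = 0 := le_antisymm (by linarith) hL0
  refine ⟨fun k => ⟨hnt _, key k⟩, ?_⟩
  exact hLzero ▸ hlim
end

section
/- Let 0 < β ≤ α < 1 and let k be a nonnegative integer. If the triangle sequence of (α,β) is the constant sequence (k, k, k, …), then β = α² and α is a root of the cubic equation x³ + k·x² + x - 1 = 0. -/
/-- If a sequence satisfies an "expanding" linear recurrence and is bounded,
it must be identically zero. -/
lemma contract_aux (a b c γ θ : ℝ) (hγ0 : 0 < γ) (hγ1 : γ < 1) (hθ0 : 0 < θ)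
    (ha : 0 ≤ a) (hb0 : 0 ≤ b) (hab : a + θ ≤ γ) (hbθ : b ≤ γ * θ)
    (v : ℕ → ℝ) (hvb : ∀ n, |v n| ≤ c) (hvrec : ∀ n, v n = -a * v (n+1) - b * v (n+2)) :
    ∀ n, v n = 0 := by
  have hc0 : 0 ≤ c := le_trans (abs_nonneg _) (hvb 0)
  have hN : ∀ n, |v n| + θ * |v (n+1)| ≤ γ * (|v (n+1)| + θ * |v (n+2)|) := by
    intro n
    have h1 : |v n| ≤ a * |v (n+1)| + b * |v (n+2)| := by
      rw [hvrec n, sub_eq_add_neg]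
      calc |(-a * v (n+1)) + -(b * v (n+2))| ≤ |(-a * v (n+1))| + |(-(b * v (n+2)))| :=
            abs_add_le _ _
        _ = a * |v (n+1)| + b * |v (n+2)| := by
            rw [abs_neg, abs_mul, abs_mul, abs_neg, abs_of_nonneg ha, abs_of_nonneg hb0]
    have h2 : 0 ≤ |v (n+1)| := abs_nonneg _
    have h3 : 0 ≤ |v (n+2)| := abs_nonneg _
    nlinarith
  have hiter : ∀ n m, |v n| + θ * |v (n+1)| ≤ γ ^ m * (|v (n+m)| + θ * |v (n+m+1)|) := by
    intro n m
    induction m with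
    | zero => simp
    | succ p ih =>
      have hγp : (0:ℝ) ≤ γ ^ p := le_of_lt (pow_pos hγ0 p)
      calc |v n| + θ * |v (n+1)| ≤ γ ^ p * (|v (n+p)| + θ * |v (n+p+1)|) := ih
        _ ≤ γ ^ p * (γ * (|v (n+p+1)| + θ * |v (n+p+2)|)) :=
            mul_le_mul_of_nonneg_left (hN (n+p)) hγp
        _ = γ ^ (p+1) * (|v (n+(p+1))| + θ * |v (n+(p+1)+1)|) := by
            rw [pow_succ]
            have : n + p + 1 = n + (p + 1) := by omega
            rw [this]
            have : n + p + 2 = n + (p + 1) + 1 := by omega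
            rw [this]
            ring
  intro n
  have hb : ∀ m, |v n| + θ * |v (n+1)| ≤ γ ^ m * (c + θ * c) := by
    intro m
    have hγp : (0:ℝ) ≤ γ ^ m := le_of_lt (pow_pos hγ0 m)
    calc |v n| + θ * |v (n+1)| ≤ γ ^ m * (|v (n+m)| + θ * |v (n+m+1)|) := hiter n m
      _ ≤ γ ^ m * (c + θ * c) := by
          have h1 := hvb (n+m)
          have h2 := hvb (n+m+1)
          have : |v (n+m)| + θ * |v (n+m+1)| ≤ c + θ * c := by nlinarith
          exact mul_le_mul_of_nonneg_left this hγp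
  have hlim : Filter.Tendsto (fun m => γ ^ m * (c + θ * c)) Filter.atTop (nhds 0) := by
    have := tendsto_pow_atTop_nhds_zero_of_lt_one (le_of_lt hγ0) hγ1
    simpa using this.mul_const (c + θ * c)
  have hle : |v n| + θ * |v (n+1)| ≤ 0 :=
    ge_of_tendsto hlim (Filter.Eventually.of_forall hb)
  have h1 : 0 ≤ |v n| := abs_nonneg _
  have h2 : 0 ≤ θ * |v (n+1)| := mul_nonneg (le_of_lt hθ0) (abs_nonneg _)
  exact abs_eq_zero.mp (le_antisymm (by linarith) h1)

/-- If 0 < β ≤ α < 1 and the triangle sequence of (α,β) is the constant sequence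
(k, k, k, …), then β = α² and α is a root of x³ + kx² + x - 1 = 0. -/
theorem stmt_12 (α β : ℝ) (k : ℕ) (hβ : 0 < β) (hβα : β ≤ α) (hα : α < 1)
    (hnt : ∀ j, 0 < triD α β j) (hseq : ∀ n, triA α β n = k) :
    β = α ^ 2 ∧ α ^ 3 + (k : ℝ) * α ^ 2 + α - 1 = 0 := by
  have hα0 : 0 < α := lt_of_lt_of_le hβ hβα
  obtain ⟨r, ⟨hr0, hr1⟩, hroot⟩ :
      ∃ r : ℝ, (0 < r ∧ r < 1) ∧ r^3 + (k:ℝ)*r^2 + r - 1 = 0 := by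
    have hcont : ContinuousOn (fun x : ℝ => x^3 + (k:ℝ)*x^2 + x - 1) (Set.Icc 0 1) := by
      fun_prop
    have h := intermediate_value_Ioo (by norm_num : (0:ℝ) ≤ 1) hcont
    have h0 : (0:ℝ) ∈ Set.Ioo ((fun x : ℝ => x^3 + (k:ℝ)*x^2 + x - 1) 0)
        ((fun x : ℝ => x^3 + (k:ℝ)*x^2 + x - 1) 1) := by
      constructor
      · simp
      · simp
        positivity
    obtain ⟨r, hr, hfr⟩ := h h0
    exact ⟨r, ⟨hr.1, hr.2⟩, hfr⟩
  have hK0 : (0:ℝ) ≤ (k:ℝ) := Nat.cast_nonneg k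
  set K : ℝ := (k:ℝ) with hKdef
  set d : ℕ → ℝ := triD α β with hd
  have hd0 : d 0 = 1 := rfl
  have hd1 : d 1 = α := rfl
  have hd2 : d 2 = β := rfl
  have hrec : ∀ n, d (n+3) = d n - d (n+1) - K * d (n+2) := by
    intro n
    have h2 := hnt (n+2)
    have ha := hseq n
    simp only [triA] at ha
    show triD α β (n+3) = _
    rw [triD, if_pos h2, ha]
  -- the combination e n = r d(n+2) + r(K+r) d(n+1) + d n is geometric
  obtain ⟨c, hc0, heg⟩ :
      ∃ c : ℝ, 0 < c ∧ ∀ n, r * d (n+2) + r*(K+r) * d (n+1) + d n = c * r ^ n := by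
    refine ⟨r * β + r*(K+r) * α + 1, by positivity, ?_⟩
    intro n
    induction n with
    | zero => simp [hd0, hd1, hd2]
    | succ m ih =>
      have h := hrec m
      rw [pow_succ]
      have hm1 : m + 1 + 1 = m + 2 := rfl
      have hm2 : m + 1 + 2 = m + 3 := rfl
      rw [hm1, hm2, h]
      linear_combination r * ih - d (m+1) * hroot
  have hrn : ∀ n, (0:ℝ) < r ^ n := fun n => pow_pos hr0 n
  have hdub : ∀ n, d n < c * r ^ n := by
    intro n
    have h := heg n
    have h1 : 0 < r * d (n+2) := mul_pos hr0 (hnt (n+2))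
    have h2 : 0 < r*(K+r) * d (n+1) :=
      mul_pos (mul_pos hr0 (by linarith)) (hnt (n+1))
    linarith
  obtain ⟨A, hA0, hAc, hAs⟩ :
      ∃ A : ℝ, 0 < A ∧ A < c ∧ A * (r^3 + (K+r)*r^2 + 1) = c := by
    have hs0 : (0:ℝ) < r^3 + (K+r)*r^2 + 1 := by positivity
    have hs1 : (1:ℝ) < r^3 + (K+r)*r^2 + 1 := by nlinarith
    refine ⟨c / (r^3 + (K+r)*r^2 + 1), div_pos hc0 hs0, ?_, div_mul_cancel₀ c (ne_of_gt hs0)⟩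
    rw [div_lt_iff₀ hs0]
    nlinarith
  -- w n = d n - A r^n satisfies the homogeneous recurrence
  have hwrec : ∀ n, (d n - A * r ^ n) =
      -(r*(K+r)) * (d (n+1) - A * r ^ (n+1)) - r * (d (n+2) - A * r ^ (n+2)) := by
    intro n
    linear_combination heg n - r ^ n * hAs
  -- the normalized sequence v
  set v : ℕ → ℝ := fun n => (d n - A * r ^ n) / r ^ n with hv
  have hvb : ∀ n, |v n| ≤ c := by
    intro n
    have h1 := hdub n
    have h2 := hnt n
    have h3 : 0 < A * r ^ n := mul_pos hA0 (hrn n)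
    have h4 : A * r ^ n < c * r ^ n := by
      have := hrn n
      nlinarith
    have h5 : |d n - A * r ^ n| ≤ c * r ^ n := by
      rw [abs_le]; constructor <;> nlinarith
    show |(d n - A * r ^ n) / r ^ n| ≤ c
    rw [abs_div, abs_of_pos (hrn n), div_le_iff₀ (hrn n)]
    linarith [h5]
  have hvrec : ∀ n, v n = -(r^2*(K+r)) * v (n+1) - r^3 * v (n+2) := by
    intro n
    show (d n - A * r ^ n) / r ^ n = -(r^2*(K+r)) * ((d (n+1) - A * r ^ (n+1)) / r ^ (n+1))
      - r^3 * ((d (n+2) - A * r ^ (n+2)) / r ^ (n+2))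
    rw [hwrec n]
    have e1 : (r:ℝ) ^ n ≠ 0 := ne_of_gt (hrn n)
    have e2 : (r:ℝ) ^ (n+1) ≠ 0 := ne_of_gt (hrn (n+1))
    have e3 : (r:ℝ) ^ (n+2) ≠ 0 := ne_of_gt (hrn (n+2))
    field_simp
    ring
  -- contraction constants
  have hδ0 : (0:ℝ) < r - r^3 := by nlinarith
  set γ : ℝ := 1 - (r - r^3)/2 with hγdef
  have hγ0 : 0 < γ := by
    have h1 : r - r^3 < 1 := by nlinarith
    simp only [hγdef]; linarith
  have hγ1 : γ < 1 := by simp only [hγdef]; linarith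
  set θ : ℝ := r^3 / γ with hθdef
  have hθ0 : 0 < θ := div_pos (by positivity) hγ0
  have hθγ : γ * θ = r^3 := mul_div_cancel₀ _ (ne_of_gt hγ0)
  have hkey2 : r^2*(K+r)*γ + r^3 ≤ γ * γ := by
    have hKr : K*r^2 = 1 - r - r^3 := by linarith
    simp only [hγdef]
    nlinarith [mul_nonneg (by linarith : (0:ℝ) ≤ 1 - r) (le_of_lt hδ0), sq_nonneg (r - r^3)]
  have hkey : r^2*(K+r) + θ ≤ γ := by
    rw [← mul_le_mul_iff_of_pos_right hγ0]
    calc (r^2*(K+r) + θ) * γ = r^2*(K+r)*γ + γ * θ := by ring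
      _ = r^2*(K+r)*γ + r^3 := by rw [hθγ]
      _ ≤ γ * γ := hkey2
  have hv0 : ∀ n, v n = 0 :=
    contract_aux (r^2*(K+r)) (r^3) c γ θ hγ0 hγ1 hθ0 (by positivity) (by positivity)
      hkey (le_of_eq hθγ.symm) v hvb hvrec
  have hdA : ∀ n, d n = A * r ^ n := by
    intro n
    have h := hv0 n
    have h2 : (d n - A * r ^ n) / r ^ n = 0 := h
    have := (div_eq_zero_iff.mp h2).resolve_right (ne_of_gt (hrn n))
    linarith
  have hA1 : A = 1 := by
    have h := hdA 0
    rw [hd0] at h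
    simpa using h.symm
  have hαr : α = r := by
    have h := hdA 1
    rw [hd1, hA1] at h
    simpa using h
  have hβr : β = r^2 := by
    have h := hdA 2
    rw [hd2, hA1] at h
    simpa [sq] using h
  exact ⟨by rw [hβr, hαr], by rw [hαr]; exact hroot⟩
end

section
/- Let (α,β) ∈ △ be a pair of rational numbers. Then the triangle sequence of (α,β) terminates; that is, there is some k with d_k = 0. -/
lemma nat_no_strictAnti (f : ℕ → ℕ) (h : ∀ n, f (n+1) < f n) : False := by
  have key : ∀ n, f n + n ≤ f 0 := by
    intro n
    induction n with
    | zero => omega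
    | succ n ih => have := h n; omega
  have := key (f 0 + 1); omega

/-- If (α,β) ∈ △ is a pair of rational numbers, then the triangle sequence of (α,β)
terminates: some d_k = 0. -/
theorem stmt_14 (α β : ℚ) (hmem : ((α : ℝ), (β : ℝ)) ∈ Tri) :
    ∃ k : ℕ, triD (α : ℝ) (β : ℝ) k = 0 := by
  simp only [Tri, Set.mem_setOf_eq] at hmem
  obtain ⟨h1, h2, h3⟩ := hmem
  by_contra hne
  push_neg at hne
  set d := triD (α : ℝ) (β : ℝ) with hd
  have hd0 : d 0 = 1 := by rw [hd, triD]
  have hd1 : d 1 = α := by rw [hd, triD]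
  have hd2 : d 2 = β := by rw [hd, triD]
  have eq3 : ∀ k, 0 < d (k+2) →
      d (k+3) = d k - d (k+1) -
        ((⌊(d k - d (k+1)) / d (k+2)⌋).toNat : ℝ) * d (k+2) := by
    intro k hk
    rw [hd, triD, if_pos hk]
  have step : ∀ k, 0 < d (k+2) → d (k+1) ≤ d k →
      0 ≤ d (k+3) ∧ d (k+3) < d (k+2) := by
    intro k hp hmono
    set x := (d k - d (k+1)) / d (k+2) with hx
    have hx0 : 0 ≤ x := div_nonneg (by linarith) hp.le
    have hfl : ((⌊x⌋).toNat : ℝ) = (⌊x⌋ : ℝ) := by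
      exact_mod_cast Int.toNat_of_nonneg (Int.floor_nonneg.mpr hx0)
    have hdk : x * d (k+2) = d k - d (k+1) := div_mul_cancel₀ _ hp.ne'
    have hval : d (k+3) = Int.fract x * d (k+2) := by
      rw [eq3 k hp, hfl, ← hdk, Int.fract]
      ring
    constructor
    · rw [hval]; exact mul_nonneg (Int.fract_nonneg x) hp.le
    · rw [hval]
      calc Int.fract x * d (k+2) < 1 * d (k+2) :=
            mul_lt_mul_of_pos_right (Int.fract_lt_one x) hp
        _ = d (k+2) := one_mul _
  have inv : ∀ k, 0 < d (k+2) ∧ d (k+2) ≤ d (k+1) ∧ d (k+1) ≤ d k := by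
    intro k
    induction k with
    | zero =>
      rw [hd0, hd1, hd2]
      exact ⟨h3, h2, h1⟩
    | succ k ih =>
      obtain ⟨hp, hm1, hm2⟩ := ih
      obtain ⟨hge, hlt⟩ := step k hp hm2
      exact ⟨lt_of_le_of_ne hge (Ne.symm (hne (k+3))), hlt.le, hm1⟩
  have dec : ∀ k, d (k+3) < d (k+2) := fun k =>
    (step k (inv k).1 (inv k).2.2).2
  -- integrality
  set N : ℤ := (α.den : ℤ) * (β.den : ℤ) with hNdef
  have hN : 0 < N := by positivity
  have hNR : (0:ℝ) < (N : ℝ) := by exact_mod_cast hN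
  have triple : ∀ k, ∃ a b c : ℤ, d k = a / (N:ℝ) ∧ d (k+1) = b / (N:ℝ) ∧
      d (k+2) = c / (N:ℝ) := by
    intro k
    induction k with
    | zero =>
      refine ⟨N, α.num * β.den, β.num * α.den, ?_, ?_, ?_⟩
      · rw [hd0]; field_simp
      · rw [hd1, Rat.cast_def]
        have hda : ((α.den:ℤ):ℝ) ≠ 0 := by positivity
        have hdb : ((β.den:ℤ):ℝ) ≠ 0 := by positivity
        push_cast [hNdef] at *
        field_simp
      · rw [hd2, Rat.cast_def]
        have hda : ((α.den:ℤ):ℝ) ≠ 0 := by positivity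
        have hdb : ((β.den:ℤ):ℝ) ≠ 0 := by positivity
        push_cast [hNdef] at *
        field_simp
    | succ k ih =>
      obtain ⟨a, b, c, ha, hb, hc⟩ := ih
      refine ⟨b, c, a - b - ((⌊(d k - d (k+1)) / d (k+2)⌋).toNat : ℤ) * c, hb, hc, ?_⟩
      rw [eq3 k (inv k).1, ha, hb, hc]
      push_cast
      field_simp
  have rat : ∀ k, ∃ m : ℤ, d k = m / (N:ℝ) := by
    intro k
    obtain ⟨a, _, _, ha, _, _⟩ := triple k
    exact ⟨a, ha⟩
  choose m hm using rat
  have hmpos : ∀ k, 0 < m (k+2) := by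
    intro k
    have hp := (inv k).1
    rw [hm] at hp
    rcases div_pos_iff.mp hp with ⟨h, _⟩ | ⟨_, h⟩
    · exact_mod_cast h
    · linarith
  have hmdec : ∀ k, m (k+3) < m (k+2) := by
    intro k
    have := dec k
    rw [hm, hm] at this
    have := (div_lt_div_iff_of_pos_right hNR).mp this
    exact_mod_cast this
  exact nat_no_strictAnti (fun k => (m (k+2)).toNat) (by
    intro n
    have h1 := hmdec n
    have h2 : 0 < m (n+3) := hmpos (n+1)
    show (m (n+3)).toNat < (m (n+2)).toNat
    omega)
end

section
/- Let n ≥ 2. Every point of the simplex △ = {(x_1,…,x_n) : 1 ≥ x_1 ≥ … ≥ x_n > 0} lies in △_k for some nonnegative integer k, or in △_{ij} for some pair (i,j) with 1 ≤ i ≤ n-2 and i < j ≤ n; moreover the sets △_k (over distinct nonnegative integers k) are pairwise disjoint, and each △_k with k ≥ 1 is disjoint from every △_{ij}. -/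
open Finset in
/-- The j-th coordinate (1-indexed, j = 1, …, N) of a point of ℝᴺ, with the
convention that all other coordinates (in particular the (N+1)-st) are 0. -/
def coord1 {N : ℕ} (x : Fin N → ℝ) (j : ℕ) : ℝ :=
  if h : 1 ≤ j ∧ j ≤ N then x ⟨j - 1, by omega⟩ else 0

/-- The partial sum x₁ + ⋯ + x_i (1-indexed coordinates). -/
def psum1 {N : ℕ} (x : Fin N → ℝ) (i : ℕ) : ℝ :=
  ∑ j ∈ Finset.Icc 1 i, coord1 x j

/-- The simplex △ = {(x₁,…,xₙ) : 1 ≥ x₁ ≥ … ≥ xₙ > 0} in ℝⁿ. -/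
def SimplexN (n : ℕ) : Set (Fin n → ℝ) :=
  {x | coord1 x 1 ≤ 1 ∧ (∀ j, 1 ≤ j → j < n → coord1 x (j + 1) ≤ coord1 x j) ∧
    0 < coord1 x n}

/-- △ₖ = {x ∈ △ : 1 - x₁ - … - x_{n-1} - k·xₙ ≥ 0 > 1 - x₁ - … - x_{n-1} - (k+1)·xₙ}. -/
def SimplexK (n k : ℕ) : Set (Fin n → ℝ) :=
  {x | x ∈ SimplexN n ∧ 0 ≤ 1 - psum1 x (n - 1) - (k : ℝ) * coord1 x n ∧
    1 - psum1 x (n - 1) - ((k : ℝ) + 1) * coord1 x n < 0}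

/-- △' = {x ∈ △ : 1 - x₁ - … - xₙ < 0}. -/
def SimplexPrime (n : ℕ) : Set (Fin n → ℝ) :=
  {x | x ∈ SimplexN n ∧ 1 - psum1 x n < 0}

/-- △ᵢⱼ = {x ∈ △' : xⱼ ≥ 1 - x₁ - … - xᵢ ≥ x_{j+1}}, with the convention x_{n+1} = 0. -/
def SimplexIJ (n i j : ℕ) : Set (Fin n → ℝ) :=
  {x | x ∈ SimplexPrime n ∧ coord1 x (j + 1) ≤ 1 - psum1 x i ∧
    1 - psum1 x i ≤ coord1 x j}

lemma switch_aux {P : ℕ → Prop} {a b : ℕ} (hab : a ≤ b) (ha : P a) (hb : ¬P b) :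
    ∃ i, a ≤ i ∧ i < b ∧ P i ∧ ¬P (i + 1) := by
  induction b with
  | zero =>
    interval_cases a
    exact absurd ha hb
  | succ b ih =>
    by_cases h : P b
    · have hab' : a ≤ b := by
        rcases eq_or_lt_of_le hab with rfl | h2
        · exact absurd ha hb
        · omega
      exact ⟨b, hab', Nat.lt_succ_self b, h, hb⟩
    · have hab' : a ≤ b := by
        rcases eq_or_lt_of_le hab with rfl | h2
        · exact absurd ha hb
        · omega
      obtain ⟨i, h1, h2, h3, h4⟩ := ih hab' h
      exact ⟨i, h1, by omega, h3, h4⟩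

lemma psum1_succ {N : ℕ} (x : Fin N → ℝ) (i : ℕ) :
    psum1 x (i + 1) = psum1 x i + coord1 x (i + 1) := by
  unfold psum1
  rw [Finset.sum_Icc_succ_top (by omega)]

lemma coord1_zero_of_gt {N : ℕ} (x : Fin N → ℝ) {j : ℕ} (h : N < j) : coord1 x j = 0 := by
  unfold coord1
  rw [dif_neg]
  omega

lemma psum1_one {N : ℕ} (x : Fin N → ℝ) : psum1 x 1 = coord1 x 1 := by
  simp [psum1]

/-- Every point of the simplex △ lies in some △ₖ or in some △ᵢⱼ (1 ≤ i ≤ n-2,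
i < j ≤ n); the △ₖ are pairwise disjoint; and each △ₖ with k ≥ 1 is disjoint
from every △ᵢⱼ. -/
theorem stmt_16 (n : ℕ) (hn : 2 ≤ n) :
    (∀ x ∈ SimplexN n,
      (∃ k : ℕ, x ∈ SimplexK n k) ∨
      (∃ i j : ℕ, 1 ≤ i ∧ i ≤ n - 2 ∧ i < j ∧ j ≤ n ∧ x ∈ SimplexIJ n i j)) ∧
    (∀ k l : ℕ, k ≠ l → Disjoint (SimplexK n k) (SimplexK n l)) ∧
    (∀ k : ℕ, 1 ≤ k → ∀ i j : ℕ, 1 ≤ i → i ≤ n - 2 → i < j → j ≤ n →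
      Disjoint (SimplexK n k) (SimplexIJ n i j)) := by
  have hsum : ∀ x : Fin n → ℝ, psum1 x n = psum1 x (n - 1) + coord1 x n := by
    intro x
    have h := psum1_succ x (n - 1)
    rw [Nat.sub_add_cancel (by omega)] at h
    exact h
  refine ⟨?_, ?_, ?_⟩
  · intro x hx
    obtain ⟨h1, h2, h3⟩ := hx
    by_cases hcase : 0 ≤ 1 - psum1 x (n - 1)
    · left
      set S := psum1 x (n - 1) with hS
      set t := coord1 x n with ht
      refine ⟨⌊(1 - S) / t⌋₊, ⟨h1, h2, h3⟩, ?_, ?_⟩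
      · have h4 : (⌊(1 - S) / t⌋₊ : ℝ) ≤ (1 - S) / t := Nat.floor_le (by positivity)
        have h5 := (le_div_iff₀ h3).mp h4
        linarith
      · have h4 : (1 - S) / t < ⌊(1 - S) / t⌋₊ + 1 := Nat.lt_floor_add_one _
        have h5 := (div_lt_iff₀ h3).mp h4
        linarith
    · right
      push_neg at hcase
      have hP1 : 0 ≤ 1 - psum1 x 1 := by rw [psum1_one]; linarith
      obtain ⟨i, hi1, hi2, hi3, hi4⟩ :=
        switch_aux (P := fun i => 0 ≤ 1 - psum1 x i) (a := 1) (b := n - 1)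
          (by omega) hP1 (by simpa using not_le.mpr hcase)
      simp only [not_le] at hi4
      have hstep : psum1 x (i + 1) = psum1 x i + coord1 x (i + 1) := psum1_succ x i
      have hd0 : 0 ≤ 1 - psum1 x i := hi3
      have hdlt : 1 - psum1 x i < coord1 x (i + 1) := by rw [hstep] at hi4; linarith
      have hprime : 1 - psum1 x n < 0 := by
        rw [hsum x]; linarith
      have hmem : x ∈ SimplexPrime n := ⟨⟨h1, h2, h3⟩, hprime⟩
      by_cases hj : coord1 x (i + 2) ≤ 1 - psum1 x i
      · exact ⟨i, i + 1, hi1, by omega, by omega, by omega, hmem, hj, le_of_lt hdlt⟩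
      · have hQn : coord1 x (n + 1) ≤ 1 - psum1 x i := by
          rw [coord1_zero_of_gt x (by omega)]; exact hd0
        obtain ⟨j', hj1, hj2, hj3, hj4⟩ :=
          switch_aux (P := fun j => ¬ coord1 x (j + 1) ≤ 1 - psum1 x i)
            (a := i + 1) (b := n) (by omega) hj (not_not_intro hQn)
        refine ⟨i, j' + 1, hi1, by omega, by omega, by omega, hmem, not_not.mp hj4,
          le_of_lt (lt_of_not_ge hj3)⟩
  · have key : ∀ k l : ℕ, k < l → Disjoint (SimplexK n k) (SimplexK n l) := by
      intro k l hkl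
      rw [Set.disjoint_left]
      rintro x ⟨hx, hk1, hk2⟩ ⟨hx', hl1, hl2⟩
      have ht : 0 < coord1 x n := hx.2.2
      have hcast : ((k : ℝ) + 1) ≤ (l : ℝ) := by exact_mod_cast hkl
      have := mul_le_mul_of_nonneg_right hcast ht.le
      linarith
    intro k l hkl
    rcases hkl.lt_or_gt with h | h
    · exact key k l h
    · exact (key l k h).symm
  · intro k hk i j hi1 hi2 hij hjn
    rw [Set.disjoint_left]
    rintro x ⟨hx, hk1, hk2⟩ ⟨⟨hx', hprime⟩, _, _⟩
    have ht : 0 < coord1 x n := hx.2.2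
    have hk' : (1 : ℝ) ≤ (k : ℝ) := by exact_mod_cast hk
    rw [hsum x] at hprime
    have := mul_le_mul_of_nonneg_right hk' ht.le
    linarith
end

section
/- Let n ≥ 2 and let k be a nonnegative integer. The topological closure of △_k in ℝⁿ equals the convex hull of the following n+1 points: for each l = 1, …, n-1, the point whose first l coordinates are 1/l and whose remaining coordinates are 0, together with the two points (1/(n+k-1), …, 1/(n+k-1)) and (1/(n+k), …, 1/(n+k)). -/
open Finset

/-! ### Auxiliary machinery for `stmt_17` -/

/-- 0-indexed coordinate with junk value 0 out of range. -/
def s17Xc {n : ℕ} (x : Fin n → ℝ) (j : ℕ) : ℝ := if h : j < n then x ⟨j, h⟩ else 0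

/-- Sum of the first n-1 coordinates. -/
def s17Sm {n : ℕ} (x : Fin n → ℝ) : ℝ := ∑ j ∈ Finset.range (n-1), s17Xc x j

/-- The closed polytope. -/
def s17P (n k : ℕ) : Set (Fin n → ℝ) :=
  {x | s17Xc x 0 ≤ 1 ∧ (∀ j, j + 1 < n → s17Xc x (j+1) ≤ s17Xc x j) ∧
    0 ≤ s17Xc x (n-1) ∧ 0 ≤ 1 - s17Sm x - (k : ℝ) * s17Xc x (n-1) ∧
    1 - s17Sm x - ((k : ℝ) + 1) * s17Xc x (n-1) ≤ 0}

/-- The vertex set. -/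
def s17V (n k : ℕ) : Set (Fin n → ℝ) :=
  {x : Fin n → ℝ | ∃ l : ℕ, 1 ≤ l ∧ l ≤ n - 1 ∧
      x = fun m : Fin n => if (m : ℕ) < l then 1 / (l : ℝ) else 0} ∪
    {fun _ : Fin n => 1 / ((n : ℝ) + (k : ℝ) - 1),
     fun _ : Fin n => 1 / ((n : ℝ) + (k : ℝ))}

lemma s17coord1_eq {n : ℕ} (x : Fin n → ℝ) {j : ℕ} (h1 : 1 ≤ j) :
    coord1 x j = s17Xc x (j-1) := by
  unfold coord1 s17Xc
  rcases le_or_gt j n with h | h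
  · rw [dif_pos ⟨h1, h⟩, dif_pos (by omega)]
  · rw [dif_neg (by omega), dif_neg (by omega)]

lemma s17psum1_eq {n : ℕ} (x : Fin n → ℝ) (i : ℕ) :
    psum1 x i = ∑ j ∈ range i, s17Xc x j := by
  unfold psum1
  rw [← Finset.Ico_add_one_right_eq_Icc, Finset.sum_Ico_eq_sum_range]
  refine Finset.sum_congr rfl fun j hj => ?_
  rw [s17coord1_eq x (by omega)]
  congr 1
  omega

lemma s17memK {n k : ℕ} (hn : 2 ≤ n) (x : Fin n → ℝ) :
    x ∈ SimplexK n k ↔ s17Xc x 0 ≤ 1 ∧ (∀ j, j + 1 < n → s17Xc x (j+1) ≤ s17Xc x j) ∧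
      0 < s17Xc x (n-1) ∧ 0 ≤ 1 - s17Sm x - (k : ℝ) * s17Xc x (n-1) ∧
      1 - s17Sm x - ((k : ℝ) + 1) * s17Xc x (n-1) < 0 := by
  have e1 : coord1 x 1 = s17Xc x 0 := s17coord1_eq x le_rfl
  have en : coord1 x n = s17Xc x (n-1) := s17coord1_eq x (by omega)
  have eS : psum1 x (n-1) = s17Sm x := s17psum1_eq x (n-1)
  constructor
  · rintro ⟨⟨hx1, hx2, hx3⟩, hx4, hx5⟩
    refine ⟨by rwa [e1] at hx1, fun j hj => ?_, by rwa [en] at hx3,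
      by rwa [en, eS] at hx4, by rwa [en, eS] at hx5⟩
    have := hx2 (j+1) (by omega) (by omega)
    rw [s17coord1_eq x (by omega), s17coord1_eq x (by omega)] at this
    simpa using this
  · rintro ⟨h1, h2, h3, h4, h5⟩
    refine ⟨⟨by rwa [e1], fun j hj1 hj2 => ?_, by rwa [en]⟩,
      by rwa [en, eS], by rwa [en, eS]⟩
    rw [s17coord1_eq x (by omega), s17coord1_eq x (by omega)]
    have := h2 (j-1) (by omega)
    have ej : j - 1 + 1 = j + 1 - 1 := by omega
    rwa [ej] at this
lemma s17Xc_comb {n : ℕ} (a b : ℝ) (x y : Fin n → ℝ) (j : ℕ) :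
    s17Xc (a • x + b • y) j = a * s17Xc x j + b * s17Xc y j := by
  unfold s17Xc
  by_cases h : j < n
  · simp [dif_pos h]
  · simp [dif_neg h]

lemma s17Sm_comb {n : ℕ} (a b : ℝ) (x y : Fin n → ℝ) :
    s17Sm (a • x + b • y) = a * s17Sm x + b * s17Sm y := by
  unfold s17Sm
  rw [Finset.mul_sum, Finset.mul_sum, ← Finset.sum_add_distrib]
  exact Finset.sum_congr rfl fun j _ => s17Xc_comb a b x y j

lemma s17Xc_cont {n : ℕ} (j : ℕ) : Continuous (fun x : Fin n → ℝ => s17Xc x j) := by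
  unfold s17Xc
  by_cases h : j < n
  · simp only [dif_pos h]; exact continuous_apply _
  · simp only [dif_neg h]; exact continuous_const

lemma s17Sm_cont {n : ℕ} : Continuous (fun x : Fin n → ℝ => s17Sm x) :=
  continuous_finset_sum _ fun j _ => s17Xc_cont j

lemma s17P_closed (n k : ℕ) : IsClosed (s17P n k) := by
  have h1 : IsClosed {x : Fin n → ℝ | s17Xc x 0 ≤ 1} :=
    isClosed_le (s17Xc_cont 0) continuous_const
  have h2 : IsClosed {x : Fin n → ℝ | ∀ j, j + 1 < n → s17Xc x (j+1) ≤ s17Xc x j} := by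
    have : {x : Fin n → ℝ | ∀ j, j + 1 < n → s17Xc x (j+1) ≤ s17Xc x j} =
        ⋂ j, ⋂ (_ : j + 1 < n), {x : Fin n → ℝ | s17Xc x (j+1) ≤ s17Xc x j} := by
      ext x; simp [Set.mem_iInter]
    rw [this]
    exact isClosed_iInter fun j => isClosed_iInter fun _ =>
      isClosed_le (s17Xc_cont _) (s17Xc_cont _)
  have h3 : IsClosed {x : Fin n → ℝ | 0 ≤ s17Xc x (n-1)} :=
    isClosed_le continuous_const (s17Xc_cont _)
  have h4 : IsClosed {x : Fin n → ℝ | 0 ≤ 1 - s17Sm x - (k : ℝ) * s17Xc x (n-1)} :=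
    isClosed_le continuous_const (((continuous_const.sub s17Sm_cont).sub
      (continuous_const.mul (s17Xc_cont _))))
  have h5 : IsClosed {x : Fin n → ℝ | 1 - s17Sm x - ((k : ℝ) + 1) * s17Xc x (n-1) ≤ 0} :=
    isClosed_le (((continuous_const.sub s17Sm_cont).sub
      (continuous_const.mul (s17Xc_cont _)))) continuous_const
  have e : s17P n k = {x : Fin n → ℝ | s17Xc x 0 ≤ 1} ∩
      ({x | ∀ j, j + 1 < n → s17Xc x (j+1) ≤ s17Xc x j} ∩
      ({x | 0 ≤ s17Xc x (n-1)} ∩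
      ({x | 0 ≤ 1 - s17Sm x - (k : ℝ) * s17Xc x (n-1)} ∩
       {x | 1 - s17Sm x - ((k : ℝ) + 1) * s17Xc x (n-1) ≤ 0}))) := by
    ext x; simp only [s17P, Set.mem_setOf_eq, Set.mem_inter_iff]
  rw [e]
  exact h1.inter (h2.inter (h3.inter (h4.inter h5)))
lemma s17P_convex (n k : ℕ) : Convex ℝ (s17P n k) := by
  rintro x ⟨x1, x2, x3, x4, x5⟩ y ⟨y1, y2, y3, y4, y5⟩ a b ha hb hab
  refine ⟨?_, fun j hj => ?_, ?_, ?_, ?_⟩ <;>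
    simp only [s17Xc_comb, s17Sm_comb]
  · nlinarith
  · nlinarith [x2 j hj, y2 j hj]
  · nlinarith
  · nlinarith [mul_nonneg ha x4, mul_nonneg hb y4]
  · nlinarith [mul_nonneg ha (neg_nonneg.mpr x5), mul_nonneg hb (neg_nonneg.mpr y5)]
lemma s17K_subset_P (n k : ℕ) (hn : 2 ≤ n) : SimplexK n k ⊆ s17P n k := by
  intro x hx
  rw [s17memK hn] at hx
  exact ⟨hx.1, hx.2.1, le_of_lt hx.2.2.1, hx.2.2.2.1, le_of_lt hx.2.2.2.2⟩

lemma s17split (n : ℕ) (hn : 2 ≤ n) (g : ℕ → ℝ) :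
    ∑ l ∈ range (n+1), g l = (∑ l ∈ range (n-1), g l) + g (n-1) + g n := by
  rw [show n + 1 = (n-1+1)+1 by omega, Finset.sum_range_succ, Finset.sum_range_succ,
    show n-1+1 = n by omega]

lemma s17P_subset_closure (n k : ℕ) (hn : 2 ≤ n) :
    s17P n k ⊆ closure (SimplexK n k) := by
  intro x hx
  obtain ⟨h1, h2, h3, h4, h5⟩ := hx
  have hN : (2:ℝ) ≤ (n:ℝ) := by exact_mod_cast hn
  have hK : (0:ℝ) ≤ (k:ℝ) := Nat.cast_nonneg k
  set c : ℝ := (n:ℝ) + (k:ℝ) - 1 with hc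
  have hc1 : 1 ≤ c := by rw [hc]; linarith
  have hc0 : 0 < c := by linarith
  have hc0' : 0 < c + 1 := by linarith
  set μ : ℝ := (1/c + 1/(c+1))/2 with hμ
  have hμpos : 0 < μ := by positivity
  have hμ1 : μ ≤ 1 := by
    have e1 : 1/c ≤ 1 := by rw [div_le_one hc0]; linarith
    have e2 : 1/(c+1) ≤ 1 := by rw [div_le_one hc0']; linarith
    rw [hμ]; linarith
  have hA : 0 < 1 - c * μ := by
    have : 1 - c * μ = 1/(2*(c+1)) := by
      rw [hμ]; field_simp; ring
    rw [this]; positivity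
  have hB : 1 - (c+1) * μ < 0 := by
    have : 1 - (c+1) * μ = -(1/(2*c)) := by
      rw [hμ]; field_simp; ring
    rw [this]
    have : 0 < 1/(2*c) := by positivity
    linarith
  set mv : Fin n → ℝ := fun _ => μ with hmv
  set y : ℕ → (Fin n → ℝ) := fun m => x + (1/((m:ℝ)+1)) • (mv - x) with hy
  have hten : Filter.Tendsto y Filter.atTop (nhds x) := by
    have h0 := (tendsto_one_div_add_atTop_nhds_zero_nat : Filter.Tendsto (fun n : ℕ => 1 / ((n : ℝ) + 1)) Filter.atTop (nhds 0)).smul_const (mv - x)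
    rw [zero_smul] at h0
    have h0' := h0.const_add x
    rw [add_zero] at h0'
    exact h0'
  refine mem_closure_of_tendsto hten (Filter.Eventually.of_forall fun m => ?_)
  set t : ℝ := 1/((m:ℝ)+1) with ht
  have ht0 : 0 < t := by positivity
  have ht1 : t ≤ 1 := by
    rw [ht, div_le_one (by positivity)]
    have : (0:ℝ) ≤ (m:ℝ) := Nat.cast_nonneg m
    linarith
  have hXy : ∀ j, j < n → s17Xc (y m) j = s17Xc x j + t * (μ - s17Xc x j) := by
    intro j hj
    simp only [hy, s17Xc, dif_pos hj, Pi.add_apply, Pi.smul_apply, Pi.sub_apply,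
      hmv, smul_eq_mul]
    rfl
  have hSy : s17Sm (y m) = s17Sm x + t * (((n:ℕ) - 1 : ℕ) * μ - s17Sm x) := by
    unfold s17Sm
    rw [Finset.sum_congr rfl (fun j hj => hXy j (by
      have := Finset.mem_range.mp hj; omega))]
    rw [Finset.sum_add_distrib, ← Finset.mul_sum, Finset.sum_sub_distrib,
      Finset.sum_const, Finset.card_range]
    simp [s17Sm, nsmul_eq_mul]
  have hcast : (((n:ℕ) - 1 : ℕ) : ℝ) = (n:ℝ) - 1 := by
    have : 1 ≤ n := by omega
    push_cast [Nat.cast_sub this]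
    ring
  rw [s17memK hn]
  have hn1 : n - 1 < n := by omega
  refine ⟨?_, fun j hj => ?_, ?_, ?_, ?_⟩
  · rw [hXy 0 (by omega)]; nlinarith
  · rw [hXy (j+1) hj, hXy j (by omega)]
    have := h2 j hj
    nlinarith
  · rw [hXy (n-1) hn1]; nlinarith
  · rw [hXy (n-1) hn1, hSy, hcast]
    have key : 1 - (s17Sm x + t * (((n:ℝ) - 1) * μ - s17Sm x)) -
        (k:ℝ) * (s17Xc x (n-1) + t * (μ - s17Xc x (n-1))) =
        (1-t) * (1 - s17Sm x - (k:ℝ) * s17Xc x (n-1)) + t * (1 - c * μ) := by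
      rw [hc]; ring
    rw [key]
    have p1 := mul_nonneg (by linarith : (0:ℝ) ≤ 1 - t) h4
    have p2 := mul_pos ht0 hA
    linarith
  · rw [hXy (n-1) hn1, hSy, hcast]
    have key : 1 - (s17Sm x + t * (((n:ℝ) - 1) * μ - s17Sm x)) -
        ((k:ℝ) + 1) * (s17Xc x (n-1) + t * (μ - s17Xc x (n-1))) =
        (1-t) * (1 - s17Sm x - ((k:ℝ)+1) * s17Xc x (n-1)) + t * (1 - (c+1) * μ) := by
      rw [hc]; ring
    rw [key]
    have p1 := mul_nonpos_of_nonneg_of_nonpos (by linarith : (0:ℝ) ≤ 1 - t) h5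
    have p2 := mul_neg_of_pos_of_neg ht0 hB
    linarith
lemma s17P_subset_hull (n k : ℕ) (hn : 2 ≤ n) :
    s17P n k ⊆ convexHull ℝ (s17V n k) := by
  intro x hx
  obtain ⟨h1, h2, h3, h4, h5⟩ := hx
  have hN : (2:ℝ) ≤ (n:ℝ) := by exact_mod_cast hn
  have hK : (0:ℝ) ≤ (k:ℝ) := Nat.cast_nonneg k
  have hc0 : (0:ℝ) < (n:ℝ) + (k:ℝ) - 1 := by linarith
  set c : ℝ := (n:ℝ) + (k:ℝ) - 1 with hc
  have hc0' : (0:ℝ) < c + 1 := by linarith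
  set a : ℝ := c * (((k:ℝ)+1) * s17Xc x (n-1) + s17Sm x - 1) with ha
  set b : ℝ := (c+1) * (1 - s17Sm x - (k:ℝ) * s17Xc x (n-1)) with hb
  set W : ℕ → ℝ := fun l => if l < n-1 then ((l:ℝ)+1) * (s17Xc x l - s17Xc x (l+1))
    else if l = n-1 then a else b with hW
  set Z : ℕ → (Fin n → ℝ) := fun l => if l < n-1 then
      (fun m : Fin n => if (m:ℕ) < l+1 then 1/((l:ℝ)+1) else 0)
    else if l = n-1 then (fun _ => 1/c) else (fun _ => 1/(c+1)) with hZ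
  have hWn : W n = b := by
    have e1 : ¬ n < n - 1 := by omega
    have e2 : n ≠ n - 1 := by omega
    simp [hW, e1, e2]
  have hWn1 : W (n-1) = a := by simp [hW]
  have hcast : ((n-1 : ℕ):ℝ) = (n:ℝ) - 1 := by
    push_cast [Nat.cast_sub (by omega : 1 ≤ n)]; ring
  have htel : ∑ l ∈ range (n-1), W l = s17Sm x - ((n:ℝ)-1) * s17Xc x (n-1) := by
    have step : ∀ l ∈ range (n-1), W l =
        ((fun j : ℕ => (j:ℝ) * s17Xc x j) l - (fun j : ℕ => (j:ℝ) * s17Xc x j) (l+1)) + s17Xc x l := by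
      intro l hl
      have hl' := Finset.mem_range.mp hl
      simp only [hW, if_pos hl']
      push_cast
      ring
    rw [Finset.sum_congr rfl step, Finset.sum_add_distrib,
      Finset.sum_range_sub' (fun j : ℕ => (j:ℝ) * s17Xc x j)]
    simp only [Nat.cast_zero, zero_mul, hcast]
    unfold s17Sm
    ring
  have hsumW : ∑ l ∈ range (n+1), W l = 1 := by
    rw [s17split n hn W, htel, hWn1, hWn, ha, hb, hc]
    ring
  have hnonneg : ∀ l ∈ range (n+1), 0 ≤ W l := by
    intro l _
    simp only [hW]
    by_cases h : l < n-1
    · rw [if_pos h]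
      have hm := h2 l (by omega)
      have hp : (0:ℝ) ≤ (l:ℝ)+1 := by positivity
      nlinarith
    · rw [if_neg h]
      by_cases h' : l = n-1
      · rw [if_pos h', ha]
        apply mul_nonneg (le_of_lt hc0)
        linarith
      · rw [if_neg h', hb]
        apply mul_nonneg (by linarith)
        linarith
  have hmem : ∀ l : Fin (n+1), Z (l:ℕ) ∈ s17V n k := by
    intro l
    by_cases hl : (l:ℕ) < n-1
    · refine Set.mem_union_left _ ⟨(l:ℕ)+1, by omega, by omega, ?_⟩
      simp only [hZ, if_pos hl]
      funext m
      by_cases h : (m:ℕ) < (l:ℕ)+1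
      · rw [if_pos h, if_pos h]
        push_cast
        ring
      · rw [if_neg h, if_neg h]
    · by_cases hl2 : (l:ℕ) = n-1
      · refine Set.mem_union_right _ (Set.mem_insert_iff.mpr (Or.inl ?_))
        simp only [hZ, if_neg hl, if_pos hl2]
        rfl
      · refine Set.mem_union_right _ (Set.mem_insert_iff.mpr (Or.inr ?_))
        rw [Set.mem_singleton_iff]
        simp only [hZ, if_neg hl, if_neg hl2]
        funext m
        rw [hc]
        norm_num
  have hxeq : ∑ l : Fin (n+1), W (l:ℕ) • Z (l:ℕ) = x := by
    funext i
    have hi : (i:ℕ) < n := i.isLt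
    have hXi : s17Xc x (i:ℕ) = x i := by unfold s17Xc; rw [dif_pos hi]
    rw [Finset.sum_apply]
    simp only [Pi.smul_apply, smul_eq_mul]
    rw [Fin.sum_univ_eq_sum_range (fun l => W l * Z l i) (n+1), s17split n hn]
    have hZn1i : Z (n-1) i = 1/c := by
      have e : ¬ (n-1 < n-1) := by omega
      simp [hZ, e]
    have hZni : Z n i = 1/(c+1) := by
      have e1 : ¬ (n < n-1) := by omega
      have e2 : n ≠ n-1 := by omega
      simp [hZ, e1, e2]
    have hterm : ∀ l ∈ range (n-1), W l * Z l i =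
        if (i:ℕ) ≤ l then s17Xc x l - s17Xc x (l+1) else 0 := by
      intro l hl
      have hl' := Finset.mem_range.mp hl
      simp only [hW, hZ]
      rw [if_pos hl', if_pos hl']
      by_cases h : (i:ℕ) < l + 1
      · rw [if_pos h, if_pos (by omega)]
        have hne : ((l:ℝ)+1) ≠ 0 := by positivity
        rw [mul_one_div, mul_div_cancel_left₀ _ hne]
      · rw [if_neg h, if_neg (by omega), mul_zero]
    have hsum2 : ∑ l ∈ range (n-1), W l * Z l i = s17Xc x (i:ℕ) - s17Xc x (n-1) := by
      rw [Finset.sum_congr rfl hterm, Finset.range_eq_Ico,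
        ← Finset.sum_Ico_consecutive _ (Nat.zero_le (i:ℕ)) (by omega : (i:ℕ) ≤ n-1)]
      rw [Finset.sum_congr (rfl : Finset.Ico 0 (i:ℕ) = Finset.Ico 0 (i:ℕ))
          (fun l hl => if_neg (by have := (Finset.mem_Ico.mp hl).2; omega)),
        Finset.sum_const, smul_zero, zero_add]
      rw [Finset.sum_congr rfl (fun l hl => if_pos (Finset.mem_Ico.mp hl).1)]
      rw [Finset.sum_Ico_eq_sum_range]
      have e1 : ∀ j ∈ range (n-1-(i:ℕ)), s17Xc x ((i:ℕ)+j) - s17Xc x ((i:ℕ)+j+1) =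
          (fun j => s17Xc x ((i:ℕ)+j)) j - (fun j => s17Xc x ((i:ℕ)+j)) (j+1) := by
        intro j _
        simp only
        congr 2
      rw [Finset.sum_congr rfl e1, Finset.sum_range_sub' (fun j => s17Xc x ((i:ℕ)+j))]
      show s17Xc x ((i:ℕ)+0) - s17Xc x ((i:ℕ)+(n-1-(i:ℕ))) = _
      rw [show (i:ℕ)+0 = (i:ℕ) from rfl, show (i:ℕ)+(n-1-(i:ℕ)) = n-1 from by omega]
    rw [hsum2, hWn1, hWn, hZn1i, hZni]
    have e2 : a * (1/c) = ((k:ℝ)+1) * s17Xc x (n-1) + s17Sm x - 1 := by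
      rw [ha, mul_one_div, mul_div_cancel_left₀ _ (ne_of_gt hc0)]
    have e3 : b * (1/(c+1)) = 1 - s17Sm x - (k:ℝ) * s17Xc x (n-1) := by
      rw [hb, mul_one_div, mul_div_cancel_left₀ _ (ne_of_gt hc0')]
    rw [e2, e3, hXi]
    ring
  have hsum1 : ∑ l : Fin (n+1), W (l:ℕ) = 1 := by
    rw [Fin.sum_univ_eq_sum_range W (n+1)]; exact hsumW
  have hfin : x = Finset.univ.centerMass (fun l : Fin (n+1) => W (l:ℕ))
      (fun l : Fin (n+1) => Z (l:ℕ)) := by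
    rw [Finset.centerMass_eq_of_sum_1 _ _ hsum1]
    exact hxeq.symm
  rw [hfin]
  refine Finset.centerMass_mem_convexHull _
    (fun (l : Fin (n+1)) _ => hnonneg (l:ℕ) (Finset.mem_range.mpr l.isLt)) ?_ (fun (l : Fin (n+1)) _ => hmem l)
  rw [show (∑ l : Fin (n+1), W (l:ℕ)) = 1 from hsum1]
  norm_num
lemma s17const_mem (n k : ℕ) (hn : 2 ≤ n) (c : ℝ) (hc1 : 1 ≤ c)
    (hcn : (n:ℝ) - 1 ≤ c) (hge : 0 ≤ 1 - ((n:ℝ) - 1) * (1/c) - (k:ℝ) * (1/c))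
    (hle : 1 - ((n:ℝ) - 1) * (1/c) - ((k:ℝ) + 1) * (1/c) ≤ 0) :
    (fun _ : Fin n => 1/c) ∈ s17P n k := by
  have hc0 : 0 < c := by linarith
  have hX : ∀ j, j < n → s17Xc (fun _ : Fin n => 1/c) j = 1/c := by
    intro j hj; simp [s17Xc, dif_pos hj]
  have hS : s17Sm (fun _ : Fin n => 1/c) = ((n:ℝ) - 1) * (1/c) := by
    unfold s17Sm
    rw [Finset.sum_congr rfl (fun j hj => hX j (by have := Finset.mem_range.mp hj; omega)),
      Finset.sum_const, Finset.card_range, nsmul_eq_mul]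
    congr 1
    have : 1 ≤ n := by omega
    push_cast [Nat.cast_sub this]
    ring
  refine ⟨?_, fun j hj => ?_, ?_, ?_, ?_⟩
  · rw [hX 0 (by omega)]; rw [div_le_one hc0]; linarith
  · rw [hX (j+1) hj, hX j (by omega)]
  · rw [hX (n-1) (by omega)]; positivity
  · rw [hX (n-1) (by omega), hS]; exact hge
  · rw [hX (n-1) (by omega), hS]; exact hle

lemma s17V_subset_P (n k : ℕ) (hn : 2 ≤ n) : s17V n k ⊆ s17P n k := by
  have hN : (2:ℝ) ≤ (n:ℝ) := by exact_mod_cast hn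
  have hK : (0:ℝ) ≤ (k:ℝ) := Nat.cast_nonneg k
  rintro v (⟨l, hl1, hl2, rfl⟩ | hv)
  · -- the vertex v_l
    have hln : l < n := by omega
    have hl0 : (0:ℝ) < (l:ℝ) := by exact_mod_cast hl1
    have hX : ∀ j, s17Xc (fun m : Fin n => if (m:ℕ) < l then 1/(l:ℝ) else 0) j =
        if j < l then 1/(l:ℝ) else 0 := by
      intro j
      unfold s17Xc
      by_cases h : j < n
      · rw [dif_pos h]
      · rw [dif_neg h, if_neg (by omega)]
    have hS : s17Sm (fun m : Fin n => if (m:ℕ) < l then 1/(l:ℝ) else 0) = 1 := by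
      unfold s17Sm
      rw [Finset.sum_congr rfl (fun j _ => hX j), Finset.range_eq_Ico,
        ← Finset.sum_Ico_consecutive _ (Nat.zero_le l) (by omega : l ≤ n - 1)]
      rw [Finset.sum_congr rfl (fun j hj => if_pos (Finset.mem_Ico.mp hj).2),
        Finset.sum_congr (rfl : Finset.Ico l (n-1) = Finset.Ico l (n-1))
          (fun j hj => if_neg (by have := (Finset.mem_Ico.mp hj).1; omega))]
      rw [Finset.sum_const, Finset.sum_const, Nat.card_Ico, Nat.sub_zero, nsmul_eq_mul,
        smul_zero, add_zero]
      field_simp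
    refine ⟨?_, fun j hj => ?_, ?_, ?_, ?_⟩
    · rw [hX 0, if_pos (by omega), div_le_one hl0]
      exact_mod_cast hl1
    · rw [hX (j+1), hX j]
      by_cases h1 : j + 1 < l
      · rw [if_pos h1, if_pos (by omega)]
      · rw [if_neg h1]
        by_cases h2 : j < l
        · rw [if_pos h2]; positivity
        · rw [if_neg h2]
    · rw [hX (n-1), if_neg (by omega)]
    · rw [hX (n-1), if_neg (by omega), hS]; norm_num
    · rw [hX (n-1), if_neg (by omega), hS]; norm_num
  · -- p or q
    rcases hv with hv | hv
    · rw [hv]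
      have hc1 : (1:ℝ) ≤ (n:ℝ) + (k:ℝ) - 1 := by linarith
      refine s17const_mem n k hn _ hc1 (by linarith) ?_ ?_
      · have : 1 - ((n:ℝ) - 1) * (1/((n:ℝ) + (k:ℝ) - 1)) - (k:ℝ) * (1/((n:ℝ) + (k:ℝ) - 1)) = 0 := by
          field_simp
          ring
        rw [this]
      · have : 1 - ((n:ℝ) - 1) * (1/((n:ℝ) + (k:ℝ) - 1)) - ((k:ℝ)+1) * (1/((n:ℝ) + (k:ℝ) - 1)) =
            -(1/((n:ℝ) + (k:ℝ) - 1)) := by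
          field_simp
          ring
        rw [this]
        have : 0 < 1/((n:ℝ) + (k:ℝ) - 1) := by positivity
        linarith
    · rw [Set.mem_singleton_iff.mp hv]
      have hc1 : (1:ℝ) ≤ (n:ℝ) + (k:ℝ) := by linarith
      refine s17const_mem n k hn _ hc1 (by linarith) ?_ ?_
      · have : 1 - ((n:ℝ) - 1) * (1/((n:ℝ) + (k:ℝ))) - (k:ℝ) * (1/((n:ℝ) + (k:ℝ))) =
            1/((n:ℝ) + (k:ℝ)) := by
          field_simp
          ring
        rw [this]
        positivity
      · have : 1 - ((n:ℝ) - 1) * (1/((n:ℝ) + (k:ℝ))) - ((k:ℝ)+1) * (1/((n:ℝ) + (k:ℝ))) = 0 := by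
          field_simp
          ring
        rw [this]
/-- The topological closure of △ₖ in ℝⁿ equals the convex hull of the n+1 points:
for l = 1, …, n-1, the point whose first l coordinates are 1/l and whose remaining
coordinates are 0, together with (1/(n+k-1), …, 1/(n+k-1)) and (1/(n+k), …, 1/(n+k)). -/
theorem stmt_17 (n k : ℕ) (hn : 2 ≤ n) :
    closure (SimplexK n k) =
      convexHull ℝ
        ({x : Fin n → ℝ | ∃ l : ℕ, 1 ≤ l ∧ l ≤ n - 1 ∧
            x = fun m : Fin n => if (m : ℕ) < l then 1 / (l : ℝ) else 0} ∪
          {fun _ : Fin n => 1 / ((n : ℝ) + (k : ℝ) - 1),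
           fun _ : Fin n => 1 / ((n : ℝ) + (k : ℝ))}) := by
  have hV : ({x : Fin n → ℝ | ∃ l : ℕ, 1 ≤ l ∧ l ≤ n - 1 ∧
            x = fun m : Fin n => if (m : ℕ) < l then 1 / (l : ℝ) else 0} ∪
          {fun _ : Fin n => 1 / ((n : ℝ) + (k : ℝ) - 1),
           fun _ : Fin n => 1 / ((n : ℝ) + (k : ℝ))}) = s17V n k := rfl
  rw [hV]
  apply Set.Subset.antisymm
  · exact (closure_minimal (s17K_subset_P n k hn) (s17P_closed n k)).trans
      (s17P_subset_hull n k hn)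
  · exact (convexHull_min (s17V_subset_P n k hn) (s17P_convex n k)).trans
      (s17P_subset_closure n k hn)
end
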